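/- arXiv:0704.0079 — 11 statements merged into one kernel-verified Lean document; each statement's English description precedes it below -/
import Mathlib

section
/- Let n ≥ 1 and let Z be a (1+n)×(1+n) complex matrix written in block form Z = [[z₀, η₁*],[η₂, Z₁]] with z₀ ∈ ℂ, η₁, η₂ ∈ ℂⁿ and Z₁ an n×n matrix. Then Z*JZ = J (where J = diag(1, −Iₙ)) if and only if the following equations hold: ‖η₁‖² = ‖η₂‖² = |z₀|² − 1, Z₁η₁ = conj(z₀)·η₂, Z₁*η₂ = z₀·η₁, Z₁*Z₁ = Iₙ + η₁η₁*, and Z₁Z₁* = Iₙ + η₂η₂*. -/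
/-!
Block multiplication turns `Zᴴ J Z = J` into three equations: the corner, the upper-right
block and the lower-right block of `Zᴴ J Z` (the lower-left block is the conjugate transpose of
the upper-right one). Since `J² = 1`, the inverse of `Z` is `J Zᴴ J`, so `Zᴴ J Z = J` also gives
`Z J Zᴴ = J`, and `Zᴴ` is a matrix of the same bordered shape with `z₀, η₁, η₂, Z₁` replaced by
`conj z₀, η₂, η₁, Z₁ᴴ`. Its three equations supply the other half of the list.
-/

open Matrix

theorem mul_mul_eq_of_mul_mul_eq {M : Type*} [Monoid M] [IsDedekindFiniteMonoid M] {J W Z : M}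
    (hJ : J * J = 1) (h : W * J * Z = J) : Z * J * W = J := by
  have hleft : (J * W * J) * Z = 1 := by rw [mul_assoc J W, mul_assoc J, h, hJ]
  calc Z * J * W = Z * (J * W * J) * J := by simp only [mul_assoc, hJ, mul_one]
    _ = J := by rw [mul_eq_one_comm.mp hleft, one_mul]

namespace Matrix

section Signature

variable {m n R : Type*} [Fintype m] [Fintype n] [DecidableEq m] [DecidableEq n] [Ring R]

theorem signature_mul_self :
    (fromBlocks 1 0 0 (-1) : Matrix (m ⊕ n) (m ⊕ n) R) * fromBlocks 1 0 0 (-1) = 1 := by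
  simp [fromBlocks_multiply, ← fromBlocks_one]

variable [StarRing R]

theorem fromBlocks_conjTranspose_mul_signature_mul (A : Matrix m m R) (B : Matrix m n R)
    (C : Matrix n m R) (D : Matrix n n R) :
    (fromBlocks A B C D)ᴴ * fromBlocks 1 0 0 (-1) * fromBlocks A B C D =
      fromBlocks (Aᴴ * A - Cᴴ * C) (Aᴴ * B - Cᴴ * D) (Bᴴ * A - Dᴴ * C) (Bᴴ * B - Dᴴ * D) := by
  simp [fromBlocks_conjTranspose, fromBlocks_multiply, sub_eq_add_neg]

theorem fromBlocks_conjTranspose_mul_signature_mul_eq_iff (A : Matrix m m R) (B : Matrix m n R)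
    (C : Matrix n m R) (D : Matrix n n R) :
    (fromBlocks A B C D)ᴴ * fromBlocks 1 0 0 (-1) * fromBlocks A B C D = fromBlocks 1 0 0 (-1) ↔
      Aᴴ * A - Cᴴ * C = 1 ∧ Aᴴ * B = Cᴴ * D ∧ Bᴴ * B - Dᴴ * D = -1 := by
  rw [fromBlocks_conjTranspose_mul_signature_mul, fromBlocks_inj]
  have hlower : Bᴴ * A - Dᴴ * C = 0 ↔ Aᴴ * B = Cᴴ * D := by
    rw [← conjTranspose_inj, conjTranspose_sub, conjTranspose_zero, sub_eq_zero]
    simp only [conjTranspose_mul, conjTranspose_conjTranspose]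
  rw [hlower, sub_eq_zero]
  tauto

end Signature

section Bordered

variable {n : Type*}

def bordered (z : ℂ) (ξ η : n → ℂ) (D : Matrix n n ℂ) : Matrix (Unit ⊕ n) (Unit ⊕ n) ℂ :=
  fromBlocks (of fun _ _ => z) (replicateRow Unit (star ξ)) (replicateCol Unit η) D

theorem conjTranspose_bordered (z : ℂ) (ξ η : n → ℂ) (D : Matrix n n ℂ) :
    (bordered z ξ η D)ᴴ = bordered (star z) η ξ Dᴴ := by
  rw [bordered, fromBlocks_conjTranspose, conjTranspose_replicateRow, conjTranspose_replicateCol,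
    star_star]
  rfl

variable [Fintype n]

theorem corner_sub_eq_one_iff (z : ℂ) (η : n → ℂ) :
    (of fun _ _ => z : Matrix Unit Unit ℂ)ᴴ * (of fun _ _ => z) -
        (replicateCol Unit η)ᴴ * replicateCol Unit η = 1 ↔
      ∑ i, ‖η i‖ ^ 2 = ‖z‖ ^ 2 - 1 := by
  have hsq : ∀ w : ℂ, star w * w = ((‖w‖ ^ 2 : ℝ) : ℂ) := fun w => by
    rw [Complex.star_def, mul_comm, Complex.mul_conj, Complex.normSq_eq_norm_sq]
  rw [← Matrix.ext_iff]
  simp only [Unique.forall_iff, sub_apply, mul_apply, conjTranspose_apply, of_apply, one_apply_eq,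
    replicateCol, Finset.univ_unique, Finset.sum_singleton, hsq]
  rw [← Complex.ofReal_sum, ← Complex.ofReal_sub, ← Complex.ofReal_one, Complex.ofReal_inj]
  constructor <;> intro h <;> linarith

theorem corner_mul_replicateRow_eq_iff (z : ℂ) (ξ η : n → ℂ) (D : Matrix n n ℂ) :
    (of fun _ _ => z : Matrix Unit Unit ℂ)ᴴ * replicateRow Unit (star ξ) =
        (replicateCol Unit η)ᴴ * D ↔
      Dᴴ *ᵥ η = z • ξ := by
  rw [← Matrix.ext_iff, funext_iff]
  simp only [Unique.forall_iff, mul_apply, conjTranspose_apply, of_apply, replicateRow,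
    replicateCol, Finset.univ_unique, Finset.sum_singleton, mulVec, dotProduct, Pi.smul_apply,
    Pi.star_apply, smul_eq_mul]
  refine forall_congr' fun j => ?_
  rw [← star_inj]
  simp only [star_mul, star_star, star_sum, eq_comm, mul_comm]

variable [DecidableEq n]

theorem replicateRow_sub_eq_neg_one_iff (ξ : n → ℂ) (D : Matrix n n ℂ) :
    (replicateRow Unit (star ξ))ᴴ * replicateRow Unit (star ξ) - Dᴴ * D = -1 ↔
      Dᴴ * D = 1 + vecMulVec ξ (star ξ) := by
  rw [conjTranspose_replicateRow, star_star, ← vecMulVec_eq, sub_eq_iff_eq_add, eq_comm,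
    neg_add_eq_iff_eq_add]

theorem bordered_conjTranspose_mul_signature_mul_eq_iff (z : ℂ) (ξ η : n → ℂ)
    (D : Matrix n n ℂ) :
    (bordered z ξ η D)ᴴ * fromBlocks 1 0 0 (-1) * bordered z ξ η D = fromBlocks 1 0 0 (-1) ↔
      ∑ i, ‖η i‖ ^ 2 = ‖z‖ ^ 2 - 1 ∧ Dᴴ *ᵥ η = z • ξ ∧ Dᴴ * D = 1 + vecMulVec ξ (star ξ) := by
  rw [bordered, fromBlocks_conjTranspose_mul_signature_mul_eq_iff, corner_sub_eq_one_iff,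
    corner_mul_replicateRow_eq_iff, replicateRow_sub_eq_neg_one_iff]

end Bordered

end Matrix

theorem stmt_1_general (n : ℕ) (z₀ : ℂ) (η₁ η₂ : Fin n → ℂ)
    (Z₁ : Matrix (Fin n) (Fin n) ℂ)
    (Z : Matrix (Unit ⊕ Fin n) (Unit ⊕ Fin n) ℂ)
    (hZ : Z = Matrix.fromBlocks (fun _ _ => z₀) (fun _ j => star (η₁ j))
      (fun i _ => η₂ i) Z₁)
    (J : Matrix (Unit ⊕ Fin n) (Unit ⊕ Fin n) ℂ)
    (hJ : J = Matrix.fromBlocks 1 0 0 (-1)) :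
    Zᴴ * J * Z = J ↔
      ((∑ i, ‖η₁ i‖ ^ 2 = ‖z₀‖ ^ 2 - 1) ∧
       (∑ i, ‖η₂ i‖ ^ 2 = ‖z₀‖ ^ 2 - 1) ∧
       Z₁ *ᵥ η₁ = (starRingEnd ℂ) z₀ • η₂ ∧
       Z₁ᴴ *ᵥ η₂ = z₀ • η₁ ∧
       Z₁ᴴ * Z₁ = 1 + Matrix.vecMulVec η₁ (star η₁) ∧
       Z₁ * Z₁ᴴ = 1 + Matrix.vecMulVec η₂ (star η₂)) := by
  replace hZ : Z = bordered z₀ η₁ η₂ Z₁ := hZ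
  have hJJ : J * J = 1 := hJ ▸ signature_mul_self
  have hboth : Zᴴ * J * Z = J ↔ Zᴴ * J * Z = J ∧ Zᴴᴴ * J * Zᴴ = J := by
    rw [conjTranspose_conjTranspose]
    exact ⟨fun h => ⟨h, mul_mul_eq_of_mul_mul_eq hJJ h⟩, And.left⟩
  rw [hboth, hZ, hJ, bordered_conjTranspose_mul_signature_mul_eq_iff, conjTranspose_bordered,
    bordered_conjTranspose_mul_signature_mul_eq_iff, conjTranspose_conjTranspose, norm_star,
    starRingEnd_apply]
  tauto

/-- characterization of block matrices in U(1,n):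
`Z*JZ = J` iff the five block equations hold. -/
theorem stmt_1 (n : ℕ) (hn : 1 ≤ n) (z₀ : ℂ) (η₁ η₂ : Fin n → ℂ)
    (Z₁ : Matrix (Fin n) (Fin n) ℂ)
    (Z : Matrix (Unit ⊕ Fin n) (Unit ⊕ Fin n) ℂ)
    (hZ : Z = Matrix.fromBlocks (fun _ _ => z₀) (fun _ j => star (η₁ j))
      (fun i _ => η₂ i) Z₁)
    (J : Matrix (Unit ⊕ Fin n) (Unit ⊕ Fin n) ℂ)
    (hJ : J = Matrix.fromBlocks 1 0 0 (-1)) :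
    Zᴴ * J * Z = J ↔
      ((∑ i, ‖η₁ i‖ ^ 2 = ‖z₀‖ ^ 2 - 1) ∧
       (∑ i, ‖η₂ i‖ ^ 2 = ‖z₀‖ ^ 2 - 1) ∧
       Z₁ *ᵥ η₁ = (starRingEnd ℂ) z₀ • η₂ ∧
       Z₁ᴴ *ᵥ η₂ = z₀ • η₁ ∧
       Z₁ᴴ * Z₁ = 1 + Matrix.vecMulVec η₁ (star η₁) ∧
       Z₁ * Z₁ᴴ = 1 + Matrix.vecMulVec η₂ (star η₂)) :=
  stmt_1_general n z₀ η₁ η₂ Z₁ Z hZ J hJ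
end

section
/- Let n ≥ 1, let α ∈ ℂⁿ with ‖α‖ < 1, and set x₀ = (1−‖α‖²)^{−1/2}, η = x₀·α, and X₁ = (Iₙ + ηη*)^{1/2} (positive semidefinite square root). Then for every λ in the open Euclidean unit ball 𝔹ₙ of ℂⁿ the denominator x₀ + ⟨λ,η⟩ is nonzero, and the map θ(λ) = (X₁λ + η)/(x₀ + ⟨λ,η⟩) is a bijection of 𝔹ₙ onto itself. -/
/-!
The map `θ` is the projective action of the block matrix `G = [[X₁, η], [η*, x₀]]`, which is
Hermitian and preserves the form `‖z‖² - |t|²` on `ℂⁿ × ℂ`: `X₁² = 1 + ηη*`, `X₁η = x₀η` and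
`‖η‖² = x₀² - 1`. Concretely, `‖X₁λ + η‖² = ‖λ‖² - 1 + |x₀ + ⟨λ,η⟩|²`, so on the ball the
denominator cannot vanish and `‖θ(λ)‖² - 1 = (‖λ‖² - 1) / |x₀ + ⟨λ,η⟩|² < 0`. The same data with
`η` replaced by `-η` satisfies the same identities, and the corresponding map inverts `θ`.
-/

open Matrix ComplexOrder
open scoped MatrixOrder

namespace Matrix

variable {ι : Type*} [Fintype ι]

lemma dotProduct_star_self_eq_sum_norm_sq (z : ι → ℂ) :
    z ⬝ᵥ star z = ((∑ i, ‖z i‖ ^ 2 : ℝ) : ℂ) := by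
  push_cast
  refine Finset.sum_congr rfl fun i _ => ?_
  simp [Complex.mul_conj, Complex.normSq_eq_norm_sq]

lemma IsHermitian.mulVec_dotProduct_star {R : Type*} [CommSemiring R] [StarRing R]
    {X : Matrix ι ι R} (hX : X.IsHermitian) (u v : ι → R) :
    X *ᵥ u ⬝ᵥ star v = u ⬝ᵥ star (X *ᵥ v) := by
  rw [star_mulVec, hX.eq, dotProduct_comm, dotProduct_mulVec, dotProduct_comm]

variable [DecidableEq ι]

lemma one_add_vecMulVec_star_mulVec {R : Type*} [CommSemiring R] [StarRing R] (η l : ι → R) :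
    (1 + vecMulVec η (star η)) *ᵥ l = l + (l ⬝ᵥ star η) • η := by
  rw [add_mulVec, one_mulVec, vecMulVec_mulVec, op_smul_eq_smul, dotProduct_comm]

/-- `X + c` is positive definite, hence injective, and it kills `X v - c v`. -/
lemma PosSemidef.mulVec_eq_smul_of_mulVec_mulVec_eq {𝕜 : Type*} [RCLike 𝕜]
    {X : Matrix ι ι 𝕜} (hX : X.PosSemidef) {c : ℝ} (hc : 0 < c) {v : ι → 𝕜}
    (hv : X *ᵥ (X *ᵥ v) = (c : 𝕜) ^ 2 • v) : X *ᵥ v = (c : 𝕜) • v := by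
  have hpd : (X + (c : 𝕜) • 1).PosDef :=
    PosDef.posSemidef_add hX (PosDef.one.smul (RCLike.ofReal_pos.2 hc))
  refine sub_eq_zero.1 (mulVec_injective_iff_isUnit.2 hpd.isUnit ?_)
  simp only [mulVec_zero, add_mulVec, mulVec_sub, hv, smul_mulVec, one_mulVec, mulVec_smul]
  module

end Matrix

variable {ι : Type*} [Fintype ι] [DecidableEq ι]

/-- The block matrix `[[X, η], [η*, x₀]]` is Hermitian and preserves the form `‖z‖² - |t|²`
on `ℂⁿ × ℂ`. -/
structure IsHermitianPseudoUnitary (X : Matrix ι ι ℂ) (η : ι → ℂ) (x₀ : ℝ) : Prop where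
  isHermitian : X.IsHermitian
  mul_self : X * X = 1 + vecMulVec η (star η)
  mulVec_self : X *ᵥ η = (x₀ : ℂ) • η
  dotProduct_star_self : η ⬝ᵥ star η = (x₀ : ℂ) ^ 2 - 1

noncomputable def ballMobius (X : Matrix ι ι ℂ) (η : ι → ℂ) (x₀ : ℝ) (l : ι → ℂ) : ι → ℂ :=
  ((x₀ : ℂ) + l ⬝ᵥ star η)⁻¹ • (X *ᵥ l + η)

namespace IsHermitianPseudoUnitary

variable {X : Matrix ι ι ℂ} {η : ι → ℂ} {x₀ : ℝ}

lemma of_posSemidef (hX : X.PosSemidef) (hsq : X * X = 1 + vecMulVec η (star η))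
    (hx₀ : 0 < x₀) (hη : η ⬝ᵥ star η = (x₀ : ℂ) ^ 2 - 1) :
    IsHermitianPseudoUnitary X η x₀ where
  isHermitian := hX.isHermitian
  mul_self := hsq
  mulVec_self := hX.mulVec_eq_smul_of_mulVec_mulVec_eq hx₀ <| by
    rw [mulVec_mulVec, hsq, one_add_vecMulVec_star_mulVec, hη]
    module
  dotProduct_star_self := hη

lemma neg (h : IsHermitianPseudoUnitary X η x₀) : IsHermitianPseudoUnitary X (-η) x₀ where
  isHermitian := h.isHermitian
  mul_self := by rw [h.mul_self, star_neg, neg_vecMulVec, vecMulVec_neg, neg_neg]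
  mulVec_self := by rw [mulVec_neg, h.mulVec_self, smul_neg]
  dotProduct_star_self := by
    rw [star_neg, neg_dotProduct, dotProduct_neg, neg_neg, h.dotProduct_star_self]

variable (h : IsHermitianPseudoUnitary X η x₀)
include h

lemma mulVec_mulVec (l : ι → ℂ) : X *ᵥ (X *ᵥ l) = l + (l ⬝ᵥ star η) • η := by
  rw [Matrix.mulVec_mulVec, h.mul_self, one_add_vecMulVec_star_mulVec]

lemma mulVec_dotProduct_star (l : ι → ℂ) : X *ᵥ l ⬝ᵥ star η = x₀ * (l ⬝ᵥ star η) := by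
  rw [h.isHermitian.mulVec_dotProduct_star, h.mulVec_self, star_smul, dotProduct_smul,
    Complex.star_def, Complex.conj_ofReal, smul_eq_mul]

lemma sum_norm_sq_mulVec_add (l : ι → ℂ) :
    ∑ i, ‖(X *ᵥ l + η) i‖ ^ 2 = ∑ i, ‖l i‖ ^ 2 - 1 + ‖(x₀ : ℂ) + l ⬝ᵥ star η‖ ^ 2 := by
  have hXl : X *ᵥ l ⬝ᵥ star (X *ᵥ l) =
      l ⬝ᵥ star l + star (l ⬝ᵥ star η) * (l ⬝ᵥ star η) := by
    rw [h.isHermitian.mulVec_dotProduct_star, h.mulVec_mulVec, star_add, star_smul,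
      dotProduct_add, dotProduct_smul, smul_eq_mul]
  have hηXl : η ⬝ᵥ star (X *ᵥ l) = x₀ * star (l ⬝ᵥ star η) := by
    rw [← h.isHermitian.mulVec_dotProduct_star, h.mulVec_self, smul_dotProduct, smul_eq_mul,
      ← star_dotProduct_star, star_star]
  have key : (X *ᵥ l + η) ⬝ᵥ star (X *ᵥ l + η) =
      l ⬝ᵥ star l - 1 + ((x₀ : ℂ) + l ⬝ᵥ star η) * star ((x₀ : ℂ) + l ⬝ᵥ star η) := by
    simp only [star_add, add_dotProduct, dotProduct_add, hXl, hηXl, h.mulVec_dotProduct_star,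
      h.dotProduct_star_self, Complex.star_def, Complex.conj_ofReal]
    ring
  rw [dotProduct_star_self_eq_sum_norm_sq, dotProduct_star_self_eq_sum_norm_sq, Complex.star_def,
    Complex.mul_conj'] at key
  exact_mod_cast key

lemma add_dotProduct_star_ne_zero {l : ι → ℂ} (hl : ∑ i, ‖l i‖ ^ 2 < 1) :
    (x₀ : ℂ) + l ⬝ᵥ star η ≠ 0 := by
  intro hd
  have := h.sum_norm_sq_mulVec_add l
  rw [hd, norm_zero] at this
  linarith [this ▸ Finset.sum_nonneg fun i _ => sq_nonneg ‖(X *ᵥ l + η) i‖]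

lemma mapsTo_ballMobius :
    Set.MapsTo (ballMobius X η x₀) {z | ∑ i, ‖z i‖ ^ 2 < 1} {z | ∑ i, ‖z i‖ ^ 2 < 1} := by
  intro l (hl : ∑ i, ‖l i‖ ^ 2 < 1)
  have hd := norm_pos_iff.2 (h.add_dotProduct_star_ne_zero hl)
  have hsmul (c : ℂ) (z : ι → ℂ) : ∑ i, ‖(c • z) i‖ ^ 2 = ‖c‖ ^ 2 * ∑ i, ‖z i‖ ^ 2 := by
    simp only [Pi.smul_apply, smul_eq_mul, norm_mul, mul_pow, Finset.mul_sum]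
  show ∑ i, ‖ballMobius X η x₀ l i‖ ^ 2 < 1
  rw [ballMobius, hsmul, h.sum_norm_sq_mulVec_add, norm_inv, inv_pow,
    inv_mul_lt_one₀ (by positivity)]
  linarith

lemma ballMobius_neg_ballMobius {l : ι → ℂ} (hl : (x₀ : ℂ) + l ⬝ᵥ star η ≠ 0) :
    ballMobius X (-η) x₀ (ballMobius X η x₀ l) = l := by
  have hden : (x₀ : ℂ) + ballMobius X η x₀ l ⬝ᵥ star (-η) = ((x₀ : ℂ) + l ⬝ᵥ star η)⁻¹ := by
    rw [ballMobius, star_neg, dotProduct_neg, smul_dotProduct, add_dotProduct,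
      h.mulVec_dotProduct_star, h.dotProduct_star_self, smul_eq_mul]
    field_simp
    ring
  have hnum : X *ᵥ ballMobius X η x₀ l + -η = ((x₀ : ℂ) + l ⬝ᵥ star η)⁻¹ • l := by
    rw [ballMobius, mulVec_smul, mulVec_add, h.mulVec_mulVec, h.mulVec_self]
    ext i
    simp only [Pi.add_apply, Pi.smul_apply, Pi.neg_apply, smul_eq_mul]
    field_simp
    ring
  rw [ballMobius, hden, hnum, inv_inv, smul_smul, mul_inv_cancel₀ hl, one_smul]

lemma bijOn_ballMobius :
    Set.BijOn (ballMobius X η x₀) {z | ∑ i, ‖z i‖ ^ 2 < 1} {z | ∑ i, ‖z i‖ ^ 2 < 1} := by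
  refine Set.InvOn.bijOn ⟨fun l hl => ?_, fun z hz => ?_⟩
    h.mapsTo_ballMobius h.neg.mapsTo_ballMobius
  · exact h.ballMobius_neg_ballMobius (h.add_dotProduct_star_ne_zero hl)
  · simpa only [neg_neg] using
      h.neg.ballMobius_neg_ballMobius (h.neg.add_dotProduct_star_ne_zero hz)

end IsHermitianPseudoUnitary

theorem stmt_2_general (n : ℕ) (α : Fin n → ℂ)
    (hα : ∑ i, ‖α i‖ ^ 2 < 1)
    (x₀ : ℝ) (hx₀ : x₀ = (Real.sqrt (1 - ∑ i, ‖α i‖ ^ 2))⁻¹)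
    (η : Fin n → ℂ) (hη : η = fun i => (x₀ : ℂ) * α i)
    (hP : (1 + Matrix.vecMulVec η (star η)).PosSemidef)
    (X₁ : Matrix (Fin n) (Fin n) ℂ) (hX₁ : X₁ = (hP.1.eigenvectorUnitary : Matrix (Fin n) (Fin n) ℂ) *
      diagonal ((↑) ∘ (fun x : ℝ => Real.sqrt x) ∘ hP.1.eigenvalues) *
      (star hP.1.eigenvectorUnitary : Matrix (Fin n) (Fin n) ℂ)) :
    (∀ l : Fin n → ℂ, ∑ i, ‖l i‖ ^ 2 < 1 →
      (x₀ : ℂ) + ∑ i, l i * star (η i) ≠ 0) ∧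
    Set.BijOn
      (fun l : Fin n → ℂ =>
        ((x₀ : ℂ) + ∑ i, l i * star (η i))⁻¹ • (X₁ *ᵥ l + η))
      {z : Fin n → ℂ | ∑ i, ‖z i‖ ^ 2 < 1}
      {z : Fin n → ℂ | ∑ i, ‖z i‖ ^ 2 < 1} := by
  have hs : 0 < 1 - ∑ i, ‖α i‖ ^ 2 := sub_pos.2 hα
  have hx₀_pos : 0 < x₀ := hx₀ ▸ inv_pos.2 (Real.sqrt_pos.2 hs)
  have hx₀_sq : x₀ ^ 2 * (1 - ∑ i, ‖α i‖ ^ 2) = 1 := by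
    rw [hx₀, inv_pow, Real.sq_sqrt hs.le, inv_mul_cancel₀ hs.ne']
  have hη_norm : η ⬝ᵥ star η = (x₀ : ℂ) ^ 2 - 1 := by
    rw [dotProduct_star_self_eq_sum_norm_sq, hη]
    simp only [norm_mul, Complex.norm_real, Real.norm_eq_abs, mul_pow, sq_abs, ← Finset.mul_sum]
    exact_mod_cast by linear_combination -hx₀_sq
  have hX₁_sqrt : X₁ = CFC.sqrt (1 + vecMulVec η (star η)) := by
    rw [hX₁, CFC.sqrt_eq_real_sqrt _ hP.nonneg, cfcₙ_eq_cfc, hP.1.cfc_eq]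
    rfl
  have hG : IsHermitianPseudoUnitary X₁ η x₀ := .of_posSemidef
    (hX₁_sqrt ▸ (CFC.sqrt_nonneg _).posSemidef) (hX₁_sqrt ▸ CFC.sqrt_mul_sqrt_self _ hP.nonneg)
    hx₀_pos hη_norm
  exact ⟨fun l hl => hG.add_dotProduct_star_ne_zero hl, hG.bijOn_ballMobius⟩

/-- the Möbius-type map `θ(λ) = (X₁λ + η)/(x₀ + ⟨λ,η⟩)` has nonvanishing
denominator on the open unit ball of ℂⁿ and is a bijection of the ball onto itself. -/
theorem stmt_2 (n : ℕ) (hn : 1 ≤ n) (α : Fin n → ℂ)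
    (hα : ∑ i, ‖α i‖ ^ 2 < 1)
    (x₀ : ℝ) (hx₀ : x₀ = (Real.sqrt (1 - ∑ i, ‖α i‖ ^ 2))⁻¹)
    (η : Fin n → ℂ) (hη : η = fun i => (x₀ : ℂ) * α i)
    (hP : (1 + Matrix.vecMulVec η (star η)).PosSemidef)
    (X₁ : Matrix (Fin n) (Fin n) ℂ) (hX₁ : X₁ = (hP.1.eigenvectorUnitary : Matrix (Fin n) (Fin n) ℂ) *
      diagonal ((↑) ∘ (fun x : ℝ => Real.sqrt x) ∘ hP.1.eigenvalues) *
      (star hP.1.eigenvectorUnitary : Matrix (Fin n) (Fin n) ℂ)) :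
    (∀ l : Fin n → ℂ, ∑ i, ‖l i‖ ^ 2 < 1 →
      (x₀ : ℂ) + ∑ i, l i * star (η i) ≠ 0) ∧
    Set.BijOn
      (fun l : Fin n → ℂ =>
        ((x₀ : ℂ) + ∑ i, l i * star (η i))⁻¹ • (X₁ *ᵥ l + η))
      {z : Fin n → ℂ | ∑ i, ‖z i‖ ^ 2 < 1}
      {z : Fin n → ℂ | ∑ i, ‖z i‖ ^ 2 < 1} :=
  stmt_2_general n α hα x₀ hx₀ η hη hP X₁ hX₁
end

section
/- Let n, m ≥ 1, let u be a unitary nm×nm complex matrix indexed by pairs (i,j) ∈ {1,…,n}×{1,…,m}, and let (z,w) ∈ Ω_u⁰ be a point of the core. Then: (a) for each i, the vector δᵢ⊗w ∈ ℂ^{nm} with (k,l) entry δ_{i,k}·w_l satisfies u(δᵢ⊗w) = δᵢ⊗w; (b) for each j, the vector z⊗δⱼ ∈ ℂ^{nm} with (k,l) entry z_k·δ_{l,j} satisfies u(z⊗δⱼ) = z⊗δⱼ; consequently the span of all these vectors is contained in Ker(u − I), and moreover Σ_k u_{(k,l),(i,j)}·conj(z_k) = δ_{j,l}·conj(z_i)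 for all i, j, l. -/
/-!
Entrywise, `C_{(i',j')} w = 0` says `∑_l u_{(i',j'),(k,l)} w_l = δ_{k,i'} w_{j'}`, which is exactly
the `(i',j')` entry of `u (δ_k ⊗ w) = δ_k ⊗ w`; likewise `C_{(i',j')}ᵀ z = 0` gives
`u (z ⊗ δ_j) = z ⊗ δ_j`. A vector fixed by a unitary is also fixed by its adjoint, and the
`(i,j)` entry of `uᴴ (z ⊗ δ_l) = z ⊗ δ_l`, conjugated, is the last identity.
-/

open Matrix

namespace Matrix

variable {α β R : Type*}

/-- The matrix `C_{(i,j)} = u_{(i,j)} - E_{i,j}` of the paper, for `p = (i, j)`. -/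
def coreDefect [DecidableEq α] [DecidableEq β] [Ring R] (u : Matrix (α × β) (α × β) R)
    (p : α × β) : Matrix α β R :=
  of fun k l => u p (k, l) - if (k, l) = p then 1 else 0

theorem mulVec_ite_fst_apply [Fintype α] [Fintype β] [DecidableEq α]
    [NonUnitalNonAssocSemiring R] (u : Matrix (α × β) (α × β) R) (p : α × β) (w : β → R)
    (i : α) :
    (u *ᵥ fun q : α × β => if q.1 = i then w q.2 else 0) p = ∑ l, u p (i, l) * w l := by
  simp [mulVec, dotProduct, Fintype.sum_prod_type]

theorem mulVec_ite_snd_apply [Fintype α] [Fintype β] [DecidableEq β]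
    [NonUnitalNonAssocSemiring R] (u : Matrix (α × β) (α × β) R) (p : α × β) (z : α → R)
    (j : β) :
    (u *ᵥ fun q : α × β => if q.2 = j then z q.1 else 0) p = ∑ k, u p (k, j) * z k := by
  simp [mulVec, dotProduct, Fintype.sum_prod_type]

section Ring

variable [DecidableEq α] [DecidableEq β] [Ring R] (u : Matrix (α × β) (α × β) R)

theorem coreDefect_mulVec_apply [Fintype β] (p : α × β) (w : β → R) (k : α) :
    (coreDefect u p *ᵥ w) k = ∑ l, u p (k, l) * w l - if p.1 = k then w p.2 else 0 := by
  simp [coreDefect, mulVec, dotProduct, sub_mul, Prod.ext_iff, ite_and, eq_comm]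

theorem coreDefect_transpose_mulVec_apply [Fintype α] (p : α × β) (z : α → R) (l : β) :
    ((coreDefect u p)ᵀ *ᵥ z) l = ∑ k, u p (k, l) * z k - if p.2 = l then z p.1 else 0 := by
  simp [coreDefect, mulVec, dotProduct, sub_mul, Prod.ext_iff, ite_and, eq_comm]

variable [Fintype α] [Fintype β]

theorem mulVec_ite_fst_eq_self {w : β → R} (hw : ∀ p, coreDefect u p *ᵥ w = 0) (i : α) :
    (u *ᵥ fun q : α × β => if q.1 = i then w q.2 else 0)
      = fun q : α × β => if q.1 = i then w q.2 else 0 := by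
  funext p
  have h := congrFun (hw p) i
  rw [Pi.zero_apply, coreDefect_mulVec_apply, sub_eq_zero] at h
  rw [mulVec_ite_fst_apply, h]

theorem mulVec_ite_snd_eq_self {z : α → R} (hz : ∀ p, (coreDefect u p)ᵀ *ᵥ z = 0) (j : β) :
    (u *ᵥ fun q : α × β => if q.2 = j then z q.1 else 0)
      = fun q : α × β => if q.2 = j then z q.1 else 0 := by
  funext p
  have h := congrFun (hz p) j
  rw [Pi.zero_apply, coreDefect_transpose_mulVec_apply, sub_eq_zero] at h
  rw [mulVec_ite_snd_apply, h]

end Ring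

theorem conjTranspose_mulVec_eq_self_of_mem_unitaryGroup {ι : Type*} [Fintype ι] [DecidableEq ι]
    [CommRing R] [StarRing R] {u : Matrix ι ι R} (hu : u ∈ unitaryGroup ι R) {v : ι → R}
    (hv : u *ᵥ v = v) : uᴴ *ᵥ v = v := by
  conv_lhs => rw [← hv, mulVec_mulVec, ← star_eq_conjTranspose, (mem_unitaryGroup_iff').mp hu,
    one_mulVec]

end Matrix

theorem stmt_4_general (n m : ℕ)
    (u : Matrix (Fin n × Fin m) (Fin n × Fin m) ℂ)
    (hu : u ∈ Matrix.unitaryGroup (Fin n × Fin m) ℂ)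
    (z : Fin n → ℂ) (w : Fin m → ℂ)
    (hcore : ∀ i j,
      (Matrix.of fun k l => u (i, j) (k, l) - if (k, l) = (i, j) then 1 else 0) *ᵥ w = 0 ∧
      (Matrix.of fun k l => u (i, j) (k, l) - if (k, l) = (i, j) then 1 else 0)ᵀ *ᵥ z = 0) :
    (∀ i : Fin n,
      u *ᵥ (fun p : Fin n × Fin m => if p.1 = i then w p.2 else 0)
        = fun p : Fin n × Fin m => if p.1 = i then w p.2 else 0) ∧
    (∀ j : Fin m,
      u *ᵥ (fun p : Fin n × Fin m => if p.2 = j then z p.1 else 0)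
        = fun p : Fin n × Fin m => if p.2 = j then z p.1 else 0) ∧
    Submodule.span ℂ
      ((Set.range fun i : Fin n =>
          (fun p : Fin n × Fin m => if p.1 = i then w p.2 else 0)) ∪
       (Set.range fun j : Fin m =>
          (fun p : Fin n × Fin m => if p.2 = j then z p.1 else 0)))
      ≤ LinearMap.ker (Matrix.mulVecLin (u - 1)) ∧
    (∀ (i : Fin n) (j l : Fin m),
      ∑ k, u (k, l) (i, j) * star (z k) = if j = l then star (z i) else 0) := by
  have ha := mulVec_ite_fst_eq_self u fun p => (hcore p.1 p.2).1
  have hb := mulVec_ite_snd_eq_self u fun p => (hcore p.1 p.2).2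
  refine ⟨ha, hb, ?_, fun i j l => ?_⟩
  · rw [Submodule.span_le]
    rintro v (⟨i, rfl⟩ | ⟨j, rfl⟩) <;>
      simp only [SetLike.mem_coe, LinearMap.mem_ker, mulVecLin_apply, sub_mulVec, one_mulVec,
        sub_eq_zero]
    exacts [ha i, hb j]
  · have h := congrArg star
      (congrFun (conjTranspose_mulVec_eq_self_of_mem_unitaryGroup hu (hb l)) (i, j))
    simp only [mulVec_ite_snd_apply, conjTranspose_apply, star_sum, star_mul', star_star] at h
    rw [h]
    split_ifs <;> simp

/-- for a core point `(z,w)` of a unitary `u`, the vectors `δᵢ⊗w` and `z⊗δⱼ`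
are fixed by `u`, their span lies in `Ker(u − I)`, and
`Σ_k u_(k,l),(i,j)·conj(z_k) = δ_{j,l}·conj(z_i)`. -/
theorem stmt_4 (n m : ℕ) (hn : 1 ≤ n) (hm : 1 ≤ m)
    (u : Matrix (Fin n × Fin m) (Fin n × Fin m) ℂ)
    (hu : u ∈ Matrix.unitaryGroup (Fin n × Fin m) ℂ)
    (z : Fin n → ℂ) (w : Fin m → ℂ)
    (hz : ∑ i, ‖z i‖ ^ 2 ≤ 1) (hw : ∑ j, ‖w j‖ ^ 2 ≤ 1)
    (hcore : ∀ i j,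
      (Matrix.of fun k l => u (i, j) (k, l) - if (k, l) = (i, j) then 1 else 0) *ᵥ w = 0 ∧
      (Matrix.of fun k l => u (i, j) (k, l) - if (k, l) = (i, j) then 1 else 0)ᵀ *ᵥ z = 0) :
    (∀ i : Fin n,
      u *ᵥ (fun p : Fin n × Fin m => if p.1 = i then w p.2 else 0)
        = fun p : Fin n × Fin m => if p.1 = i then w p.2 else 0) ∧
    (∀ j : Fin m,
      u *ᵥ (fun p : Fin n × Fin m => if p.2 = j then z p.1 else 0)
        = fun p : Fin n × Fin m => if p.2 = j then z p.1 else 0) ∧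
    Submodule.span ℂ
      ((Set.range fun i : Fin n =>
          (fun p : Fin n × Fin m => if p.1 = i then w p.2 else 0)) ∪
       (Set.range fun j : Fin m =>
          (fun p : Fin n × Fin m => if p.2 = j then z p.1 else 0)))
      ≤ LinearMap.ker (Matrix.mulVecLin (u - 1)) ∧
    (∀ (i : Fin n) (j l : Fin m),
      ∑ k, u (k, l) (i, j) * star (z k) = if j = l then star (z i) else 0) :=
  stmt_4_general n m u hu z w hcore
end

section
/- Let n, m ≥ 1 and let u be a unitary nm×nm complex matrix indexed by pairs (i,j) ∈ {1,…,n}×{1,…,m}. (i) If the core Ω_u⁰ contains a point (z,w) with z ≠ 0, then dim_ℂ Ker(u − I) ≥ m. (ii) If Ω_u⁰ contains a point (z,w) with w ≠ 0, then dim_ℂ Ker(u − I) ≥ n. (iii) If Ω_u⁰ contains a point (z,w) with z ≠ 0 and w ≠ 0, then dim_ℂ Ker(u − I) ≥ m + n − 1. -/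
/-!
The core conditions say exactly that the row of `u - 1` indexed by `(i, j)`, reshaped into an
`n × m` matrix, kills `w` and (transposed) kills `z`. Hence `u` fixes every product vector
`x ⊗ w` and `z ⊗ y`. The maps `x ↦ x ⊗ w` and `y ↦ z ⊗ y` are injective when `w ≠ 0`,
resp. `z ≠ 0`, and their images meet inside the line spanned by `z ⊗ w`, which gives
`n`, `m` and `n + m - 1` independent fixed vectors.
-/

open Matrix

section VecKron

variable {R ι κ : Type*}

def vecKron [Mul R] (x : ι → R) (y : κ → R) : ι × κ → R := fun p => x p.1 * y p.2

@[simp]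
theorem vecKron_apply [Mul R] (x : ι → R) (y : κ → R) (p : ι × κ) :
    vecKron x y p = x p.1 * y p.2 := rfl

theorem vecKron_eq_zero_iff [MulZeroClass R] [NoZeroDivisors R] {x : ι → R} {y : κ → R} :
    vecKron x y = 0 ↔ x = 0 ∨ y = 0 := by
  refine ⟨fun h => ?_, ?_⟩
  · by_contra! hxy
    obtain ⟨⟨i, hi⟩, ⟨j, hj⟩⟩ := And.imp Function.ne_iff.mp Function.ne_iff.mp hxy
    exact mul_ne_zero hi hj (congrFun h (i, j))
  · rintro (rfl | rfl) <;> ext <;> simp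

variable (R ι κ) in
def vecKronBilin [CommSemiring R] : (ι → R) →ₗ[R] (κ → R) →ₗ[R] ι × κ → R :=
  LinearMap.mk₂ R vecKron
    (fun _ _ _ => funext fun _ => add_mul ..)
    (fun _ _ _ => funext fun _ => mul_assoc ..)
    (fun _ _ _ => funext fun _ => mul_add ..)
    (fun _ _ _ => funext fun _ => mul_left_comm ..)

@[simp]
theorem vecKronBilin_apply [CommSemiring R] (x : ι → R) (y : κ → R) :
    vecKronBilin R ι κ x y = vecKron x y := rfl

theorem mulVec_vecKron_apply [CommSemiring R] [Fintype ι] [Fintype κ]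
    (A : Matrix (ι × κ) (ι × κ) R) (x : ι → R) (y : κ → R) (p : ι × κ) :
    (A *ᵥ vecKron x y) p = x ⬝ᵥ ((of fun k l => A p (k, l)) *ᵥ y) := by
  simp only [mulVec, dotProduct, Fintype.sum_prod_type, Finset.mul_sum, vecKron_apply, of_apply]
  exact Finset.sum_congr rfl fun _ _ => Finset.sum_congr rfl fun _ _ => by ring

theorem mulVec_vecKron_apply' [CommSemiring R] [Fintype ι] [Fintype κ]
    (A : Matrix (ι × κ) (ι × κ) R) (x : ι → R) (y : κ → R) (p : ι × κ) :
    (A *ᵥ vecKron x y) p = y ⬝ᵥ ((of fun k l => A p (k, l))ᵀ *ᵥ x) := by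
  rw [mulVec_vecKron_apply, dotProduct_mulVec, mulVec_transpose, dotProduct_comm]

end VecKron

section FixedProductVectors

variable {R ι κ : Type*} [CommSemiring R] [Fintype ι] [Fintype κ]

theorem range_vecKronBilin_flip_le_ker {A : Matrix (ι × κ) (ι × κ) R} {w : κ → R}
    (h : ∀ p, (of fun k l => A p (k, l)) *ᵥ w = 0) :
    LinearMap.range ((vecKronBilin R ι κ).flip w) ≤ LinearMap.ker A.mulVecLin := by
  rintro _ ⟨x, rfl⟩
  ext p
  simp [mulVec_vecKron_apply, h p]

theorem range_vecKronBilin_le_ker {A : Matrix (ι × κ) (ι × κ) R} {z : ι → R}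
    (h : ∀ p, (of fun k l => A p (k, l))ᵀ *ᵥ z = 0) :
    LinearMap.range (vecKronBilin R ι κ z) ≤ LinearMap.ker A.mulVecLin := by
  rintro _ ⟨y, rfl⟩
  ext p
  simp [mulVec_vecKron_apply', h p]

end FixedProductVectors

section Dimension

variable {K ι κ : Type*} [Field K]

theorem finrank_range_vecKronBilin_flip [Fintype ι] {w : κ → K} (hw : w ≠ 0) :
    Module.finrank K (LinearMap.range ((vecKronBilin K ι κ).flip w)) = Fintype.card ι := by
  rw [LinearMap.finrank_range_of_inj, Module.finrank_fintype_fun_eq_card]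
  refine (injective_iff_map_eq_zero _).mpr fun x (hx : vecKron x w = 0) => ?_
  simpa [hw] using vecKron_eq_zero_iff.mp hx

theorem finrank_range_vecKronBilin [Fintype κ] {z : ι → K} (hz : z ≠ 0) :
    Module.finrank K (LinearMap.range (vecKronBilin K ι κ z)) = Fintype.card κ := by
  rw [LinearMap.finrank_range_of_inj, Module.finrank_fintype_fun_eq_card]
  refine (injective_iff_map_eq_zero _).mpr fun y (hy : vecKron z y = 0) => ?_
  simpa [hz] using vecKron_eq_zero_iff.mp hy

theorem vecKron_eq_smul_of_vecKron_eq {x z : ι → K} {y w : κ → K} (hw : w ≠ 0)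
    (h : vecKron x w = vecKron z y) : ∃ c : K, c • vecKron z w = vecKron x w := by
  obtain ⟨j₀, hj₀⟩ := Function.ne_iff.mp hw
  refine ⟨y j₀ / w j₀, funext fun p => ?_⟩
  have hx : x p.1 * w j₀ = z p.1 * y j₀ := congrFun h (p.1, j₀)
  simp only [Pi.smul_apply, vecKron_apply, smul_eq_mul]
  rw [← eq_div_iff hj₀] at hx
  rw [hx]
  ring

theorem finrank_range_inf_range_vecKronBilin_le_one [Fintype ι] [Fintype κ] (z : ι → K)
    {w : κ → K} (hw : w ≠ 0) :
    Module.finrank K ↥(LinearMap.range ((vecKronBilin K ι κ).flip w) ⊓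
      LinearMap.range (vecKronBilin K ι κ z)) ≤ 1 := by
  have hle : LinearMap.range ((vecKronBilin K ι κ).flip w) ⊓
      LinearMap.range (vecKronBilin K ι κ z) ≤ K ∙ vecKron z w := by
    rintro _ ⟨⟨x, rfl⟩, ⟨y, hxy⟩⟩
    exact Submodule.mem_span_singleton.mpr (vecKron_eq_smul_of_vecKron_eq hw hxy.symm)
  calc _ ≤ Module.finrank K (K ∙ vecKron z w) := Submodule.finrank_mono hle
    _ ≤ 1 := (finrank_span_le_card _).trans_eq (by simp)

end Dimension

theorem stmt_5_general (n m : ℕ)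
    (u : Matrix (Fin n × Fin m) (Fin n × Fin m) ℂ)
    (z : Fin n → ℂ) (w : Fin m → ℂ)
    (hcore : ∀ i j,
      (Matrix.of fun k l => u (i, j) (k, l) - if (k, l) = (i, j) then 1 else 0) *ᵥ w = 0 ∧
      (Matrix.of fun k l => u (i, j) (k, l) - if (k, l) = (i, j) then 1 else 0)ᵀ *ᵥ z = 0) :
    (z ≠ 0 → m ≤ Module.finrank ℂ (LinearMap.ker (Matrix.mulVecLin (u - 1)))) ∧
    (w ≠ 0 → n ≤ Module.finrank ℂ (LinearMap.ker (Matrix.mulVecLin (u - 1)))) ∧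
    (z ≠ 0 → w ≠ 0 →
      m + n - 1 ≤ Module.finrank ℂ (LinearMap.ker (Matrix.mulVecLin (u - 1)))) := by
  have hrow (p : Fin n × Fin m) : (of fun k l => (u - 1) p (k, l)) =
      of fun k l => u p (k, l) - if (k, l) = p then 1 else 0 := by
    ext k l
    simp [one_apply, eq_comm]
  have hV : LinearMap.range ((vecKronBilin ℂ (Fin n) (Fin m)).flip w) ≤
      LinearMap.ker (u - 1).mulVecLin :=
    range_vecKronBilin_flip_le_ker fun p => hrow p ▸ (hcore p.1 p.2).1
  have hW : LinearMap.range (vecKronBilin ℂ (Fin n) (Fin m) z) ≤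
      LinearMap.ker (u - 1).mulVecLin :=
    range_vecKronBilin_le_ker fun p => hrow p ▸ (hcore p.1 p.2).2
  refine ⟨fun hz => ?_, fun hw => ?_, fun hz hw => ?_⟩
  · calc m = _ := by rw [finrank_range_vecKronBilin hz, Fintype.card_fin]
      _ ≤ _ := Submodule.finrank_mono hW
  · calc n = _ := by rw [finrank_range_vecKronBilin_flip hw, Fintype.card_fin]
      _ ≤ _ := Submodule.finrank_mono hV
  · have hsup := Submodule.finrank_sup_add_finrank_inf_eq
      (LinearMap.range ((vecKronBilin ℂ (Fin n) (Fin m)).flip w))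
      (LinearMap.range (vecKronBilin ℂ (Fin n) (Fin m) z))
    rw [finrank_range_vecKronBilin_flip hw, finrank_range_vecKronBilin hz, Fintype.card_fin,
      Fintype.card_fin] at hsup
    have hinf := finrank_range_inf_range_vecKronBilin_le_one z hw
    have hker := Submodule.finrank_mono (sup_le hV hW)
    omega

/-- lower bounds on `dim Ker(u − I)` forced by nonzero core points. -/
theorem stmt_5 (n m : ℕ) (hn : 1 ≤ n) (hm : 1 ≤ m)
    (u : Matrix (Fin n × Fin m) (Fin n × Fin m) ℂ)
    (hu : u ∈ Matrix.unitaryGroup (Fin n × Fin m) ℂ)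
    (z : Fin n → ℂ) (w : Fin m → ℂ)
    (hz : ∑ i, ‖z i‖ ^ 2 ≤ 1) (hw : ∑ j, ‖w j‖ ^ 2 ≤ 1)
    (hcore : ∀ i j,
      (Matrix.of fun k l => u (i, j) (k, l) - if (k, l) = (i, j) then 1 else 0) *ᵥ w = 0 ∧
      (Matrix.of fun k l => u (i, j) (k, l) - if (k, l) = (i, j) then 1 else 0)ᵀ *ᵥ z = 0) :
    (z ≠ 0 → m ≤ Module.finrank ℂ (LinearMap.ker (Matrix.mulVecLin (u - 1)))) ∧
    (w ≠ 0 → n ≤ Module.finrank ℂ (LinearMap.ker (Matrix.mulVecLin (u - 1)))) ∧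
    (z ≠ 0 → w ≠ 0 →
      m + n - 1 ≤ Module.finrank ℂ (LinearMap.ker (Matrix.mulVecLin (u - 1)))) :=
  stmt_5_general n m u z w hcore
end

section
/- Let n, m ≥ 1, let u be a unitary nm×nm complex matrix indexed by pairs (i,j) ∈ {1,…,n}×{1,…,m}, and let (z,w) ∈ Ω_u. Then (z,w) lies in the core Ω_u⁰ if and only if for every λ ∈ ℂⁿ and μ ∈ ℂᵐ, the 2×2 upper triangular matrices Zᵢ = [[zᵢ, λᵢ],[0, zᵢ]] (1 ≤ i ≤ n) and Wⱼ = [[wⱼ, μⱼ],[0, wⱼ]] (1 ≤ j ≤ m) satisfy the commutation relations Zᵢ·Wⱼ = Σ_{k,l} u_{(i,j),(k,l)}·Wₗ·Zₖ for all i, j. -/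
/-!
Under the relation `z i * w j = ∑ k l, u (i,j) (k,l) * z k * w l` the diagonal entries of
`Z i * W j` and `∑ k l, u (i,j) (k,l) • W l * Z k` agree, so the commutation relations reduce to
their `(0,1)` entries. These are linear in `(λ, μ)`, with coefficient vectors `E_{ij} w` and
`E_{ij}ᵀ z` on the left and `u_{(i,j)} w` and `u_{(i,j)}ᵀ z` on the right; they hold for all
`(λ, μ)` exactly when `C_{(i,j)} w = 0` and `C_{(i,j)}ᵀ z = 0`.
-/

open Matrix

namespace Matrix

variable {R ι κ : Type*}

theorem upperTri_mul_upperTri [Semiring R] (a x b y : R) :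
    !![a, x; 0, a] * !![b, y; 0, b] = !![a * b, a * y + x * b; 0, a * b] := by
  simp

theorem upperTri_eq_upperTri_iff [Zero R] {a x b y : R} :
    !![a, x; 0, a] = !![b, y; 0, b] ↔ a = b ∧ x = y := by
  simp [and_comm]

theorem sum_smul_upperTri_mul_upperTri [Fintype ι] [Fintype κ] [CommSemiring R]
    (A : Matrix ι κ R) (z lam : ι → R) (w mu : κ → R) :
    ∑ k, ∑ l, A k l • (!![w l, mu l; 0, w l] * !![z k, lam k; 0, z k]) =
      !![∑ k, ∑ l, A k l * z k * w l, lam ⬝ᵥ A *ᵥ w + mu ⬝ᵥ Aᵀ *ᵥ z;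
         0, ∑ k, ∑ l, A k l * z k * w l] := by
  simp only [upperTri_mul_upperTri, smul_of, smul_cons, smul_empty]
  ext a b
  fin_cases a <;> fin_cases b <;>
    simp only [sum_apply, of_apply, cons_val', cons_val_zero, cons_val_one, empty_val',
      cons_val_fin_one, Fin.zero_eta, Fin.mk_one, smul_eq_mul, mul_zero, Finset.sum_const_zero,
      dot_mulVec_eq_sum_sum, transpose_apply]
  · exact Finset.sum_congr rfl fun _ _ => Finset.sum_congr rfl fun _ _ => by ring
  · rw [Finset.sum_comm (f := fun _ _ => lam _ * _ * _), ← Finset.sum_add_distrib]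
    refine Finset.sum_congr rfl fun _ _ => ?_
    rw [← Finset.sum_add_distrib]
    exact Finset.sum_congr rfl fun _ _ => by ring
  · exact Finset.sum_congr rfl fun _ _ => Finset.sum_congr rfl fun _ _ => by ring

theorem of_sub_ite_eq_sub_single [Ring R] [DecidableEq ι] [DecidableEq κ] (A : ι → κ → R)
    (i : ι) (j : κ) :
    (of fun k l => A k l - if (k, l) = (i, j) then 1 else 0) = of A - single i j 1 := by
  ext k l
  simp [single, Prod.ext_iff, eq_comm]

theorem of_sub_ite_mulVec_eq_zero_iff [Ring R] [Fintype κ] [DecidableEq ι] [DecidableEq κ]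
    (A : ι → κ → R) (i : ι) (j : κ) (w : κ → R) :
    (of fun k l => A k l - if (k, l) = (i, j) then 1 else 0) *ᵥ w = 0 ↔
      Pi.single i (w j) = of A *ᵥ w := by
  rw [of_sub_ite_eq_sub_single, sub_mulVec, sub_eq_zero, single_mulVec, one_mul, eq_comm]
  rfl

theorem transpose_of_sub_ite_mulVec_eq_zero_iff [Ring R] [Fintype ι] [DecidableEq ι]
    [DecidableEq κ] (A : ι → κ → R) (i : ι) (j : κ) (z : ι → R) :
    (of fun k l => A k l - if (k, l) = (i, j) then 1 else 0)ᵀ *ᵥ z = 0 ↔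
      Pi.single j (z i) = (of A)ᵀ *ᵥ z := by
  rw [of_sub_ite_eq_sub_single, transpose_sub, transpose_single, sub_mulVec, sub_eq_zero,
    single_mulVec, one_mul, eq_comm]
  rfl

theorem forall_dotProduct_add_dotProduct_eq_iff [CommSemiring R] [Fintype ι] [Fintype κ]
    {p p' : ι → R} {q q' : κ → R} :
    (∀ lam mu, lam ⬝ᵥ p + mu ⬝ᵥ q = lam ⬝ᵥ p' + mu ⬝ᵥ q') ↔ p = p' ∧ q = q' := by
  refine ⟨fun h => ⟨dotProduct_eq _ _ fun lam => ?_, dotProduct_eq _ _ fun mu => ?_⟩, ?_⟩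
  · simpa [dotProduct_comm] using h lam 0
  · simpa [dotProduct_comm] using h 0 mu
  · rintro ⟨rfl, rfl⟩ _ _
    rfl

theorem upperTri_mul_eq_sum_smul_iff [Fintype ι] [Fintype κ] [DecidableEq ι] [DecidableEq κ]
    [CommSemiring R] (u : Matrix (ι × κ) (ι × κ) R) (z lam : ι → R) (w mu : κ → R)
    (i : ι) (j : κ) (hV : z i * w j = ∑ k, ∑ l, u (i, j) (k, l) * z k * w l) :
    !![z i, lam i; 0, z i] * !![w j, mu j; 0, w j] =
        ∑ k, ∑ l, u (i, j) (k, l) • (!![w l, mu l; 0, w l] * !![z k, lam k; 0, z k]) ↔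
      lam ⬝ᵥ Pi.single i (w j) + mu ⬝ᵥ Pi.single j (z i) =
        lam ⬝ᵥ (of fun k l => u (i, j) (k, l)) *ᵥ w +
          mu ⬝ᵥ (of fun k l => u (i, j) (k, l))ᵀ *ᵥ z := by
  have hsum := sum_smul_upperTri_mul_upperTri (of fun k l => u (i, j) (k, l)) z lam w mu
  simp only [of_apply] at hsum
  rw [hsum, upperTri_mul_upperTri, upperTri_eq_upperTri_iff, ← hV, dotProduct_single,
    dotProduct_single]
  simp only [true_and, mul_comm (z i), add_comm (mu j * z i)]

end Matrix

theorem stmt_6_general (n m : ℕ)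
    (u : Matrix (Fin n × Fin m) (Fin n × Fin m) ℂ)
    (z : Fin n → ℂ) (w : Fin m → ℂ)
    (hV : ∀ i j, z i * w j = ∑ k, ∑ l, u (i, j) (k, l) * z k * w l) :
    (∀ i j,
      (Matrix.of fun k l => u (i, j) (k, l) - if (k, l) = (i, j) then 1 else 0) *ᵥ w = 0 ∧
      (Matrix.of fun k l => u (i, j) (k, l) - if (k, l) = (i, j) then 1 else 0)ᵀ *ᵥ z = 0)
    ↔
    (∀ (lam : Fin n → ℂ) (mu : Fin m → ℂ) (i : Fin n) (j : Fin m),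
      (!![z i, lam i; 0, z i] : Matrix (Fin 2) (Fin 2) ℂ) * !![w j, mu j; 0, w j]
        = ∑ k, ∑ l, u (i, j) (k, l) •
            ((!![w l, mu l; 0, w l] : Matrix (Fin 2) (Fin 2) ℂ) *
              !![z k, lam k; 0, z k])) := by
  calc
    _ ↔ ∀ i j lam mu, lam ⬝ᵥ Pi.single i (w j) + mu ⬝ᵥ Pi.single j (z i) =
          lam ⬝ᵥ (of fun k l => u (i, j) (k, l)) *ᵥ w +
            mu ⬝ᵥ (of fun k l => u (i, j) (k, l))ᵀ *ᵥ z :=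
      forall₂_congr fun i j =>
        ((of_sub_ite_mulVec_eq_zero_iff (fun k l => u (i, j) (k, l)) i j w).and
          (transpose_of_sub_ite_mulVec_eq_zero_iff (fun k l => u (i, j) (k, l)) i j z)).trans
          forall_dotProduct_add_dotProduct_eq_iff.symm
    _ ↔ ∀ lam mu i j, _ :=
      ⟨fun h lam mu i j => h i j lam mu, fun h i j lam mu => h lam mu i j⟩
    _ ↔ _ := forall₄_congr fun lam mu i j =>
      (upperTri_mul_eq_sum_smul_iff u z lam w mu i j (hV i j)).symm

/-- a point `(z,w)` of `Ω_u` lies in the core iff for all `λ, μ` the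
associated `2×2` upper triangular matrices satisfy the `u`-commutation relations. -/
theorem stmt_6 (n m : ℕ) (hn : 1 ≤ n) (hm : 1 ≤ m)
    (u : Matrix (Fin n × Fin m) (Fin n × Fin m) ℂ)
    (hu : u ∈ Matrix.unitaryGroup (Fin n × Fin m) ℂ)
    (z : Fin n → ℂ) (w : Fin m → ℂ)
    (hz : ∑ i, ‖z i‖ ^ 2 ≤ 1) (hw : ∑ j, ‖w j‖ ^ 2 ≤ 1)
    (hV : ∀ i j, z i * w j = ∑ k, ∑ l, u (i, j) (k, l) * z k * w l) :
    (∀ i j,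
      (Matrix.of fun k l => u (i, j) (k, l) - if (k, l) = (i, j) then 1 else 0) *ᵥ w = 0 ∧
      (Matrix.of fun k l => u (i, j) (k, l) - if (k, l) = (i, j) then 1 else 0)ᵀ *ᵥ z = 0)
    ↔
    (∀ (lam : Fin n → ℂ) (mu : Fin m → ℂ) (i : Fin n) (j : Fin m),
      (!![z i, lam i; 0, z i] : Matrix (Fin 2) (Fin 2) ℂ) * !![w j, mu j; 0, w j]
        = ∑ k, ∑ l, u (i, j) (k, l) •
            ((!![w l, mu l; 0, w l] : Matrix (Fin 2) (Fin 2) ℂ) *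
              !![z k, lam k; 0, z k])) :=
  stmt_6_general n m u z w hV
end

section
/- Let n, m ≥ 1, let u be a unitary nm×nm complex matrix indexed by pairs (i,j) ∈ {1,…,n}×{1,…,m}, and let (z,w) ∈ Ω_u⁰ be a core point with ‖z‖ < 1. Set x₀ = (1−‖z‖²)^{−1/2}, β = (x₀+1)^{−1}, and let X₁ be the n×n matrix X₁ = Iₙ + β·x₀²·M, where M is the n×n matrix with (t,i) entry conj(z_t)·z_i. Then for all i, t ∈ {1,…,n} and j, l ∈ {1,…,m}: Σ_s (X₁)_{s,i}·u_{(s,j),(t,l)} = Σ_k u_{(i,j),(k,l)}·(X₁)_{t,k}. -/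
/-!
Let `v_l = z ⊗ e_l ∈ ℂⁿ ⊗ ℂᵐ`. The core condition `C_{(i,j)}ᵀ z = 0` says exactly that `u` fixes
every `v_l`; since `u` is unitary, `u*` fixes them too, i.e. `v_l* u = v_l*`. Read blockwise, the
`n × n` blocks `B = (u_{(s,j),(t,l)})_{s,t}` satisfy `B z = δ_{jl} z` and `z* B = δ_{jl} z*`, so
each block commutes with the rank-one matrix `z z*`, hence with `X₁ᵀ = I + β x₀² z z*`. The
claimed identity is the `(i,t)` entry of `X₁ᵀ B = B X₁ᵀ`.
-/

open Matrix

namespace Matrix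

variable {ι κ R : Type*}

theorem star_vecMul_eq_of_mulVec_eq [Fintype ι] [DecidableEq ι] [CommRing R] [StarRing R]
    {U : Matrix ι ι R} (hU : U ∈ unitaryGroup ι R) {v : ι → R} (hv : U *ᵥ v = v) :
    star v ᵥ* U = star v := by
  have hstar : Uᴴ *ᵥ v = v := by
    conv_lhs => rw [← hv, mulVec_mulVec, ← star_eq_conjTranspose, hU.1, one_mulVec]
  simpa only [star_mulVec, conjTranspose_conjTranspose] using congrArg star hstar

theorem commute_vecMulVec [Fintype ι] [CommSemiring R] {B : Matrix ι ι R} {x y : ι → R} {d : R}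
    (hx : B *ᵥ x = d • x) (hy : y ᵥ* B = d • y) : Commute (vecMulVec x y) B := by
  rw [Commute, SemiconjBy, vecMulVec_mul, mul_vecMulVec, hx, hy, vecMulVec_smul,
    smul_vecMulVec]

/-- The matrix `C_{(i,j)} = u_{(i,j)} - E_{i,j}` of the core condition. -/
def rowSubSingle [DecidableEq ι] [DecidableEq κ] [Ring R] (u : Matrix (ι × κ) (ι × κ) R)
    (i : ι) (j : κ) : Matrix ι κ R :=
  of fun k l => u (i, j) (k, l) - if (k, l) = (i, j) then 1 else 0

def tensorSingle [DecidableEq κ] [Zero R] (z : ι → R) (l : κ) : ι × κ → R :=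
  fun q => if q.2 = l then z q.1 else 0

theorem mulVec_tensorSingle_apply [Fintype ι] [Fintype κ] [DecidableEq κ]
    [NonUnitalNonAssocSemiring R] (u : Matrix (ι × κ) (ι × κ) R) (z : ι → R) (l : κ) (i : ι)
    (j : κ) :
    (u *ᵥ tensorSingle z l) (i, j) = (u.submatrix (·, j) (·, l) *ᵥ z) i := by
  simp [tensorSingle, mulVec, dotProduct, Fintype.sum_prod_type]

theorem tensorSingle_vecMul_apply [Fintype ι] [Fintype κ] [DecidableEq κ]
    [NonUnitalNonAssocSemiring R] (u : Matrix (ι × κ) (ι × κ) R) (y : ι → R) (l : κ) (t : ι)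
    (j : κ) :
    (tensorSingle y l ᵥ* u) (t, j) = (y ᵥ* u.submatrix (·, l) (·, j)) t := by
  simp [tensorSingle, vecMul, dotProduct, Fintype.sum_prod_type]

theorem star_tensorSingle [DecidableEq κ] [NonUnitalNonAssocSemiring R] [StarRing R]
    (z : ι → R) (l : κ) :
    star (tensorSingle z l) = tensorSingle (star z) l := by
  ext q
  simp only [tensorSingle, Pi.star_apply]
  split_ifs <;> simp

theorem submatrix_mulVec_of_core [Fintype ι] [DecidableEq ι] [DecidableEq κ] [Ring R]
    {u : Matrix (ι × κ) (ι × κ) R} {z : ι → R} (hcore : ∀ i j, (rowSubSingle u i j)ᵀ *ᵥ z = 0)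
    (j l : κ) : u.submatrix (·, j) (·, l) *ᵥ z = (if j = l then 1 else 0 : R) • z := by
  ext i
  have h := congrFun (hcore i j) l
  simp only [rowSubSingle, mulVec, dotProduct, transpose_apply, of_apply, Pi.zero_apply, sub_mul,
    Finset.sum_sub_distrib, sub_eq_zero, Prod.ext_iff, ite_mul, one_mul, zero_mul] at h
  simp only [mulVec, dotProduct, submatrix_apply, h, Pi.smul_apply, smul_eq_mul]
  by_cases hjl : j = l
  · simp [hjl]
  · simp [hjl, Ne.symm hjl]

theorem mulVec_tensorSingle_of_core [Fintype ι] [Fintype κ] [DecidableEq ι] [DecidableEq κ]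
    [Ring R] {u : Matrix (ι × κ) (ι × κ) R} {z : ι → R}
    (hcore : ∀ i j, (rowSubSingle u i j)ᵀ *ᵥ z = 0)
    (l : κ) : u *ᵥ tensorSingle z l = tensorSingle z l := by
  ext ⟨i, j⟩
  rw [mulVec_tensorSingle_apply, submatrix_mulVec_of_core hcore]
  by_cases hjl : j = l <;> simp [tensorSingle, hjl]

theorem star_vecMul_submatrix_of_core [Fintype ι] [Fintype κ] [DecidableEq ι] [DecidableEq κ]
    [CommRing R] [StarRing R] {u : Matrix (ι × κ) (ι × κ) R}
    (hu : u ∈ unitaryGroup (ι × κ) R) {z : ι → R}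
    (hcore : ∀ i j, (rowSubSingle u i j)ᵀ *ᵥ z = 0)
    (j l : κ) : star z ᵥ* u.submatrix (·, j) (·, l) = (if j = l then 1 else 0 : R) • star z := by
  have h := star_vecMul_eq_of_mulVec_eq hu (mulVec_tensorSingle_of_core hcore j)
  rw [star_tensorSingle] at h
  ext t
  rw [← tensorSingle_vecMul_apply, h]
  by_cases hjl : j = l <;> simp [tensorSingle, hjl, Ne.symm]

end Matrix

theorem stmt_8_general (n m : ℕ)
    (u : Matrix (Fin n × Fin m) (Fin n × Fin m) ℂ)
    (hu : u ∈ Matrix.unitaryGroup (Fin n × Fin m) ℂ)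
    (z : Fin n → ℂ) (w : Fin m → ℂ)
    (hcore : ∀ i j,
      (Matrix.of fun k l => u (i, j) (k, l) - if (k, l) = (i, j) then 1 else 0) *ᵥ w = 0 ∧
      (Matrix.of fun k l => u (i, j) (k, l) - if (k, l) = (i, j) then 1 else 0)ᵀ *ᵥ z = 0)
    (x₀ β : ℝ)
    (X₁ : Matrix (Fin n) (Fin n) ℂ)
    (hX₁ : X₁ = 1 + ((β * x₀ ^ 2 : ℝ) : ℂ) •
      Matrix.of (fun t i => star (z t) * z i)) :
    ∀ (i t : Fin n) (j l : Fin m),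
      ∑ s, X₁ s i * u (s, j) (t, l) = ∑ k, u (i, j) (k, l) * X₁ t k := by
  intro i t j l
  have hcoreT : ∀ i j, (rowSubSingle u i j)ᵀ *ᵥ z = 0 := fun i j => (hcore i j).2
  have hX₁T : X₁ᵀ = 1 + ((β * x₀ ^ 2 : ℝ) : ℂ) • vecMulVec z (star z) := by
    rw [hX₁, transpose_add, transpose_one, transpose_smul]
    congr 2
    ext a b
    simp [vecMulVec_apply, mul_comm]
  have hcomm : Commute X₁ᵀ (u.submatrix (·, j) (·, l)) := by
    rw [hX₁T]
    exact (Commute.one_left _).add_left <| (commute_vecMulVec (submatrix_mulVec_of_core hcoreT j l)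
      (star_vecMul_submatrix_of_core hu hcoreT j l)).smul_left _
  simpa only [mul_apply, transpose_apply, submatrix_apply] using congrFun (congrFun hcomm.eq i) t

/-- intertwining identity for `X₁ = I + β·x₀²·M` at a core point
`(z,w)` with `‖z‖ < 1`:  `Σ_s (X₁)_{s,i}·u_{(s,j),(t,l)} = Σ_k u_{(i,j),(k,l)}·(X₁)_{t,k}`. -/
theorem stmt_8 (n m : ℕ) (hn : 1 ≤ n) (hm : 1 ≤ m)
    (u : Matrix (Fin n × Fin m) (Fin n × Fin m) ℂ)
    (hu : u ∈ Matrix.unitaryGroup (Fin n × Fin m) ℂ)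
    (z : Fin n → ℂ) (w : Fin m → ℂ)
    (hz : ∑ i, ‖z i‖ ^ 2 < 1) (hw : ∑ j, ‖w j‖ ^ 2 ≤ 1)
    (hcore : ∀ i j,
      (Matrix.of fun k l => u (i, j) (k, l) - if (k, l) = (i, j) then 1 else 0) *ᵥ w = 0 ∧
      (Matrix.of fun k l => u (i, j) (k, l) - if (k, l) = (i, j) then 1 else 0)ᵀ *ᵥ z = 0)
    (x₀ β : ℝ)
    (hx₀ : x₀ = (Real.sqrt (1 - ∑ i, ‖z i‖ ^ 2))⁻¹)
    (hβ : β = (x₀ + 1)⁻¹)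
    (X₁ : Matrix (Fin n) (Fin n) ℂ)
    (hX₁ : X₁ = 1 + ((β * x₀ ^ 2 : ℝ) : ℂ) •
      Matrix.of (fun t i => star (z t) * z i)) :
    ∀ (i t : Fin n) (j l : Fin m),
      ∑ s, X₁ s i * u (s, j) (t, l) = ∑ k, u (i, j) (k, l) * X₁ t k :=
  stmt_8_general n m u hu z w hcore x₀ β X₁ hX₁
end

section
/- Let u and v be 4×4 unitary complex matrices, indexed by pairs (i,j) ∈ {1,2}×{1,2}, each with dim_ℂ Ker(u − I) = 3 and dim_ℂ Ker(v − I) = 3. Suppose x and y are unit vectors in ℂ⁴ with u·x = λ·x and v·y = μ·y, where λ ≠ 1 and μ ≠ 1 (necessarily |λ| = |μ| = 1). Then u and v are product unitary equivalent if and only if λ = μ and there exist 2×2 unitary matrices A, B with c(x) = A·c(y)·B. -/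
/-!
A unitary `w` whose fixed space has codimension one and which has a unit eigenvector `x` for an
eigenvalue `λ ≠ 1` is the pseudo-reflection `1 + (λ - 1) x x*`: the range of `w - 1` is the line
through `x`, and unitarity forces `x* (w - 1) z = (λ - 1) x* z`. Conjugating by the unitary
`A ⊗ B` turns the pseudo-reflection along `x` into the one along `(A ⊗ B) x`, and two
pseudo-reflections along unit vectors agree exactly when their eigenvalues agree (compare traces)
and the vectors agree up to a phase. Reshaping `(A ⊗ B) y` into a `2 × 2` matrix gives
`A c(y) Bᵀ`, and the phase can be absorbed into the right factor.
-/

open Matrix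
open scoped Kronecker

theorem LinearMap.range_eq_span_singleton_of_finrank_ker_add_one {K V W : Type*} [Field K]
    [AddCommGroup V] [Module K V] [FiniteDimensional K V] [AddCommGroup W] [Module K W]
    {T : V →ₗ[K] W} (hT : Module.finrank K (LinearMap.ker T) + 1 = Module.finrank K V)
    {x : W} (hx0 : x ≠ 0) (hx : x ∈ LinearMap.range T) :
    LinearMap.range T = K ∙ x := by
  refine (Submodule.eq_of_le_of_finrank_eq
    ((Submodule.span_singleton_le_iff_mem _ _).2 hx) ?_).symm
  have := T.finrank_range_add_finrank_ker
  rw [finrank_span_singleton hx0]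
  omega

theorem star_dotProduct_self_eq_sum_norm_sq {𝕜 n : Type*} [RCLike 𝕜] [Fintype n] (x : n → 𝕜) :
    star x ⬝ᵥ x = ((∑ p, ‖x p‖ ^ 2 : ℝ) : 𝕜) := by
  simp [dotProduct, RCLike.conj_mul]

namespace Matrix

section PseudoReflection

variable {n K : Type*} [Fintype n] [Field K] [StarRing K]

theorem exists_mem_unitary_smul_eq_of_vecMulVec_star_eq {x y : n → K}
    (hx : star x ⬝ᵥ x = 1) (hy : star y ⬝ᵥ y = 1)
    (h : vecMulVec x (star x) = vecMulVec y (star y)) : ∃ c ∈ unitary K, x = c • y := by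
  obtain ⟨c, rfl⟩ : ∃ c : K, x = c • y := ⟨star y ⬝ᵥ x, by
    simpa [vecMulVec_mulVec, hx] using congrArg (· *ᵥ x) h⟩
  refine ⟨c, ?_, rfl⟩
  rw [Unitary.mem_iff_star_mul_self]
  simpa [star_smul, dotProduct_smul, smul_dotProduct, hy, mul_comm] using hx

variable [DecidableEq n]

def pseudoReflection (lam : K) (x : n → K) : Matrix n n K :=
  1 + (lam - 1) • vecMulVec x (star x)

theorem pseudoReflection_mulVec (lam : K) (x z : n → K) :
    pseudoReflection lam x *ᵥ z = z + ((lam - 1) * (star x ⬝ᵥ z)) • x := by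
  rw [pseudoReflection, add_mulVec, one_mulVec, smul_mulVec, vecMulVec_mulVec,
    op_smul_eq_smul, smul_smul]

theorem star_mulVec_dotProduct_mulVec_of_mem_unitaryGroup {M : Matrix n n K}
    (hM : M ∈ unitaryGroup n K) (a b : n → K) : star (M *ᵥ a) ⬝ᵥ (M *ᵥ b) = star a ⬝ᵥ b := by
  rw [star_mulVec, dotProduct_mulVec, vecMul_vecMul, ← star_eq_conjTranspose,
    Unitary.star_mul_self_of_mem hM, vecMul_one]

theorem star_dotProduct_mulVec_of_mulVec_eq_smul {w : Matrix n n K}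
    (hw : w ∈ unitaryGroup n K) {x : n → K} (hx : star x ⬝ᵥ x = 1) {lam : K}
    (hwx : w *ᵥ x = lam • x) (z : n → K) :
    star x ⬝ᵥ (w *ᵥ z) = lam * (star x ⬝ᵥ z) := by
  have key (z : n → K) : star lam * (star x ⬝ᵥ (w *ᵥ z)) = star x ⬝ᵥ z := by
    rw [← star_mulVec_dotProduct_mulVec_of_mem_unitaryGroup hw x z, hwx, star_smul,
      smul_dotProduct, smul_eq_mul]
  have hlam : star lam * lam = 1 := by
    simpa [hwx, dotProduct_smul, hx] using key x
  calc star x ⬝ᵥ (w *ᵥ z) = lam * (star lam * (star x ⬝ᵥ (w *ᵥ z))) := by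
        rw [← mul_assoc, mul_comm lam, hlam, one_mul]
    _ = lam * (star x ⬝ᵥ z) := by rw [key]

theorem eq_pseudoReflection_of_finrank_ker {w : Matrix n n K} (hw : w ∈ unitaryGroup n K)
    (hk : Module.finrank K (LinearMap.ker (mulVecLin (w - 1))) + 1 = Fintype.card n)
    {x : n → K} (hx : star x ⬝ᵥ x = 1) {lam : K} (hlam : lam ≠ 1) (hwx : w *ᵥ x = lam • x) :
    w = pseudoReflection lam x := by
  have hx0 : x ≠ 0 := by rintro rfl; simp at hx
  have hT (z : n → K) : mulVecLin (w - 1) z = w *ᵥ z - z := by simp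
  have hx_mem : x ∈ LinearMap.range (mulVecLin (w - 1)) := by
    refine ⟨(lam - 1)⁻¹ • x, ?_⟩
    have hsub : lam • x - x = (lam - 1) • x := by rw [sub_smul, one_smul]
    rw [map_smul, hT, hwx, hsub, smul_smul, inv_mul_cancel₀ (sub_ne_zero.2 hlam), one_smul]
  have hrange := LinearMap.range_eq_span_singleton_of_finrank_ker_add_one
    (by rwa [Module.finrank_fintype_fun_eq_card]) hx0 hx_mem
  refine ext_iff_mulVec.2 fun z => ?_
  obtain ⟨c, hc⟩ := Submodule.mem_span_singleton.1 (hrange ▸ LinearMap.mem_range_self _ z)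
  rw [hT] at hc
  have hc' : c = (lam - 1) * (star x ⬝ᵥ z) := by
    have := congrArg (star x ⬝ᵥ ·) hc
    simp only [dotProduct_smul, hx, smul_eq_mul, mul_one, dotProduct_sub,
      star_dotProduct_mulVec_of_mulVec_eq_smul hw hx hwx] at this
    rw [this]
    ring
  rw [pseudoReflection_mulVec, ← hc', hc, add_sub_cancel]

theorem mul_pseudoReflection_mul_star {M : Matrix n n K} (hM : M ∈ unitaryGroup n K)
    (lam : K) (x : n → K) :
    M * pseudoReflection lam x * star M = pseudoReflection lam (M *ᵥ x) := by
  rw [pseudoReflection, pseudoReflection, mul_add, mul_one, add_mul,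
    Unitary.mul_star_self_of_mem hM, Matrix.mul_smul, Matrix.smul_mul, mul_vecMulVec,
    vecMulVec_mul, star_mulVec, star_eq_conjTranspose]

theorem eq_and_exists_mem_unitary_smul_eq_of_pseudoReflection_eq {x y : n → K}
    (hx : star x ⬝ᵥ x = 1) (hy : star y ⬝ᵥ y = 1) {lam mu : K} (hlam : lam ≠ 1)
    (h : pseudoReflection lam x = pseudoReflection mu y) :
    lam = mu ∧ ∃ c ∈ unitary K, x = c • y := by
  have h' := add_left_cancel h
  obtain rfl : lam = mu := by
    simpa [trace_smul, dotProduct_comm x (star x), dotProduct_comm y (star y), hx, hy]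
      using congrArg trace h'
  exact ⟨rfl, exists_mem_unitary_smul_eq_of_vecMulVec_star_eq hx hy
    (smul_right_injective _ (sub_ne_zero.2 hlam) h')⟩

end PseudoReflection

theorem of_kronecker_mulVec {R l m l' m' : Type*} [CommSemiring R] [Fintype m] [Fintype m']
    (A : Matrix l m R) (B : Matrix l' m' R) (z : m × m' → R) :
    (of fun i j => ((A ⊗ₖ B) *ᵥ z) (i, j)) = A * (of fun i j => z (i, j)) * Bᵀ := by
  ext i j
  rw [of_apply, ← transpose_apply (A * _ * Bᵀ), transpose_mul, transpose_mul,
    transpose_transpose, ← Matrix.mul_assoc]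
  exact congrFun (kronecker_mulVec_vec B (of fun i j => z (i, j))ᵀ A) (i, j)

theorem of_eq_mul_of_mul_iff {R m m' : Type*} [CommSemiring R] [Fintype m] [Fintype m']
    {x y : m × m' → R} (A : Matrix m m R) (B : Matrix m' m' R) :
    (of fun i j => x (i, j)) = A * (of fun i j => y (i, j)) * B ↔ x = (A ⊗ₖ Bᵀ) *ᵥ y := by
  rw [← transpose_transpose B, ← of_kronecker_mulVec, transpose_transpose]
  exact ⟨fun h => funext fun ⟨i, j⟩ => congrFun (congrFun h i) j, fun h => h ▸ rfl⟩

end Matrix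

/-- two 4×4 unitaries with 3-dimensional fixed space, with eigen-data
`(x,λ)` and `(y,μ)` (eigenvalues ≠ 1), are product unitary equivalent iff `λ = μ` and
`c(x) = A·c(y)·B` for some 2×2 unitaries `A, B`. -/
theorem stmt_10 (u v : Matrix (Fin 2 × Fin 2) (Fin 2 × Fin 2) ℂ)
    (hu : u ∈ Matrix.unitaryGroup (Fin 2 × Fin 2) ℂ)
    (hv : v ∈ Matrix.unitaryGroup (Fin 2 × Fin 2) ℂ)
    (hku : Module.finrank ℂ (LinearMap.ker (Matrix.mulVecLin (u - 1))) = 3)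
    (hkv : Module.finrank ℂ (LinearMap.ker (Matrix.mulVecLin (v - 1))) = 3)
    (x y : Fin 2 × Fin 2 → ℂ)
    (hx : ∑ p, ‖x p‖ ^ 2 = 1) (hy : ∑ p, ‖y p‖ ^ 2 = 1)
    (lam mu : ℂ) (hlam : lam ≠ 1) (hmu : mu ≠ 1)
    (hux : u *ᵥ x = lam • x) (hvy : v *ᵥ y = mu • y) :
    (∃ A B : Matrix (Fin 2) (Fin 2) ℂ,
      A ∈ Matrix.unitaryGroup (Fin 2) ℂ ∧ B ∈ Matrix.unitaryGroup (Fin 2) ℂ ∧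
      (Matrix.kroneckerMap (· * ·) A B) * u = v * (Matrix.kroneckerMap (· * ·) A B)) ↔
    (lam = mu ∧
      ∃ A B : Matrix (Fin 2) (Fin 2) ℂ,
        A ∈ Matrix.unitaryGroup (Fin 2) ℂ ∧ B ∈ Matrix.unitaryGroup (Fin 2) ℂ ∧
        (Matrix.of fun i j => x (i, j)) = A * (Matrix.of fun i j => y (i, j)) * B) := by
  have hx1 : star x ⬝ᵥ x = 1 := by rw [star_dotProduct_self_eq_sum_norm_sq, hx]; simp
  have hy1 : star y ⬝ᵥ y = 1 := by rw [star_dotProduct_self_eq_sum_norm_sq, hy]; simp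
  have hu_eq := eq_pseudoReflection_of_finrank_ker hu (by rw [hku]; rfl) hx1 hlam hux
  have hv_eq := eq_pseudoReflection_of_finrank_ker hv (by rw [hkv]; rfl) hy1 hmu hvy
  constructor
  · rintro ⟨A, B, hA, hB, hAB⟩
    have hM := kronecker_mem_unitary hA hB
    have hv_conj : v = pseudoReflection lam ((A ⊗ₖ B) *ᵥ x) := by
      rw [← mul_pseudoReflection_mul_star hM, ← hu_eq, hAB, mul_assoc,
        Unitary.mul_star_self_of_mem hM, mul_one]
    obtain ⟨rfl, c, hc, hxy⟩ := eq_and_exists_mem_unitary_smul_eq_of_pseudoReflection_eq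
      (by rwa [star_mulVec_dotProduct_mulVec_of_mem_unitaryGroup hM]) hy1 hlam
      (hv_conj.symm.trans hv_eq)
    refine ⟨rfl, Aᴴ, (c • Bᴴ)ᵀ, Unitary.star_mem hA,
      transpose_mem_unitaryGroup_iff.2 (Unitary.smul_mem_of_mem hc (Unitary.star_mem hB)), ?_⟩
    rw [of_eq_mul_of_mul_iff, transpose_transpose, kronecker_smul, smul_mulVec, ← mulVec_smul,
      ← hxy, ← conjTranspose_kronecker, ← star_eq_conjTranspose, mulVec_mulVec,
      Unitary.star_mul_self_of_mem hM, one_mulVec]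
  · rintro ⟨rfl, A, B, hA, hB, hxy⟩
    rw [of_eq_mul_of_mul_iff] at hxy
    have hM := kronecker_mem_unitary hA (transpose_mem_unitaryGroup_iff.2 hB)
    refine ⟨Aᴴ, Bᵀᴴ, Unitary.star_mem hA,
      Unitary.star_mem (transpose_mem_unitaryGroup_iff.2 hB), ?_⟩
    rw [← conjTranspose_kronecker, ← star_eq_conjTranspose, hu_eq, hxy,
      ← mul_pseudoReflection_mul_star hM, ← hv_eq, ← mul_assoc, ← mul_assoc,
      Unitary.star_mul_self_of_mem hM, one_mul]
end

section
/- Let 0 ≤ a ≤ 1/√2 and let λ ∈ ℂ with |λ| = 1 and λ ≠ 1. Then the matrix u(a,λ) is unitary, dim_ℂ Ker(u(a,λ) − I) = 3, and the unit vector x = (a, 0, 0, (1−a²)^{1/2})ᵀ satisfies u(a,λ)·x = λ·x. -/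
/-!
Writing `x` for the real unit vector `(a, 0, 0, (1 - a²)^{1/2})`, one has
`u(a,λ) = 1 + (λ - 1) x x*`, and `x x*` is the orthogonal projection onto `ℂ x`. For any star
projection `p` and `|λ| = 1`, the element `1 + (λ - 1) p` is unitary because
`(λ̄ - 1) + (λ - 1) + (λ̄ - 1)(λ - 1) = |λ|² - 1 = 0`. Moreover `u(a,λ) - 1 = (λ - 1) x x*` has
kernel `x^⊥`, of dimension 3 when `λ ≠ 1`, and `u(a,λ) x = x + (λ - 1) x = λ x`.
-/

open Matrix

/-- The 4×4 matrix `u(a,λ)`, indexed by `{1,2}×{1,2}` in lexicographic order. -/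
noncomputable def uMat (a : ℝ) (l : ℂ) :
    Matrix (Fin 2 × Fin 2) (Fin 2 × Fin 2) ℂ :=
  Matrix.of fun p q =>
    if p = (0, 0) ∧ q = (0, 0) then (l - 1) * (a : ℂ) ^ 2 + 1
    else if p = (0, 0) ∧ q = (1, 1) then (l - 1) * (a : ℂ) * (Real.sqrt (1 - a ^ 2) : ℂ)
    else if p = (1, 1) ∧ q = (0, 0) then (l - 1) * (a : ℂ) * (Real.sqrt (1 - a ^ 2) : ℂ)
    else if p = (1, 1) ∧ q = (1, 1) then l + (1 - l) * (a : ℂ) ^ 2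
    else if p = q then 1 else 0

theorem IsIdempotentElem.one_add_smul_mul_one_add_smul {R A : Type*} [CommSemiring R] [Semiring A]
    [Algebra R A] {p : A} (hp : IsIdempotentElem p) (a b : R) :
    (1 + a • p) * (1 + b • p) = 1 + (a + b + a * b) • p := by
  rw [mul_add, mul_one, add_mul, one_mul, smul_mul_smul_comm, hp.eq, add_smul, add_smul]
  abel

theorem IsStarProjection.one_add_smul_mem_unitary {R A : Type*} [CommRing R] [StarRing R]
    [Ring A] [StarRing A] [Algebra R A] [StarModule R A] {p : A} (hp : IsStarProjection p)
    {c : R} (hc : star c * c = 1) : 1 + (c - 1) • p ∈ unitary A := by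
  have hstar : star (1 + (c - 1) • p) = 1 + (star c - 1) • p := by
    rw [star_add, star_one, star_smul, hp.isSelfAdjoint.star_eq, star_sub, star_one]
  have hcoeff : c - 1 + (star c - 1) + (c - 1) * (star c - 1) = 0 := by
    linear_combination hc
  rw [Unitary.mem_iff, hstar, hp.isIdempotentElem.one_add_smul_mul_one_add_smul,
    hp.isIdempotentElem.one_add_smul_mul_one_add_smul, add_comm (star c - 1), mul_comm (star c - 1),
    hcoeff, zero_smul, add_zero]
  exact ⟨rfl, rfl⟩

namespace Matrix

variable {n K : Type*} [Fintype n]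

theorem isStarProjection_vecMulVec_star [CommSemiring K] [StarRing K] {v : n → K}
    (hv : star v ⬝ᵥ v = 1) : IsStarProjection (vecMulVec v (star v)) where
  isIdempotentElem := by
    rw [IsIdempotentElem, vecMulVec_mul_vecMulVec, hv, one_smul]
  isSelfAdjoint := by
    rw [IsSelfAdjoint, star_eq_conjTranspose, conjTranspose_vecMulVec, star_star]

theorem vecMulVec_star_mulVec_self [CommSemiring K] [StarRing K] {v : n → K}
    (hv : star v ⬝ᵥ v = 1) : vecMulVec v (star v) *ᵥ v = v := by
  rw [vecMulVec_mulVec, hv, MulOpposite.op_one, one_smul]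

theorem finrank_ker_mulVecLin_vecMulVec_add_one [Field K] [DecidableEq n] {v w : n → K}
    (hv : v ≠ 0) (hw : w ≠ 0) :
    Module.finrank K (LinearMap.ker (vecMulVec v w).mulVecLin) + 1 = Fintype.card n := by
  have hker : LinearMap.ker (vecMulVec v w).mulVecLin = LinearMap.ker (dotProductEquiv K n w) := by
    ext y
    simp [vecMulVec_mulVec, hv]
  rw [hker, Module.Dual.finrank_ker_add_one_of_ne_zero ((dotProductEquiv K n).map_ne_zero_iff.2 hw),
    Module.finrank_fintype_fun_eq_card]

end Matrix

noncomputable def uVec (a : ℝ) : Fin 2 × Fin 2 → ℂ := fun p =>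
  if p = (0, 0) then (a : ℂ) else if p = (1, 1) then (Real.sqrt (1 - a ^ 2) : ℂ) else 0

theorem star_uVec (a : ℝ) : star (uVec a) = uVec a := by
  ext p
  simp only [uVec, Pi.star_apply]
  split_ifs <;> simp

theorem ofReal_sqrt_one_sub_sq_mul_self {a : ℝ} (ha : a ^ 2 ≤ 1) :
    (Real.sqrt (1 - a ^ 2) : ℂ) * Real.sqrt (1 - a ^ 2) = 1 - (a : ℂ) ^ 2 := by
  exact_mod_cast Real.mul_self_sqrt (sub_nonneg.2 ha)

theorem star_uVec_dotProduct_self {a : ℝ} (ha : a ^ 2 ≤ 1) : star (uVec a) ⬝ᵥ uVec a = 1 := by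
  rw [star_uVec, dotProduct, Fintype.sum_prod_type]
  simp [uVec, Fin.sum_univ_two, ofReal_sqrt_one_sub_sq_mul_self ha]
  ring

theorem sum_norm_sq_uVec {a : ℝ} (ha : a ^ 2 ≤ 1) : ∑ p, ‖uVec a p‖ ^ 2 = 1 := by
  have := congrArg Complex.re (star_uVec_dotProduct_self ha)
  simpa [dotProduct, ← Complex.normSq_eq_norm_sq, Complex.normSq_apply, mul_comm] using this

theorem uMat_eq_one_add_smul_vecMulVec {a : ℝ} (ha : a ^ 2 ≤ 1) (l : ℂ) :
    uMat a l = 1 + (l - 1) • vecMulVec (uVec a) (star (uVec a)) := by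
  rw [star_uVec]
  ext ⟨i, j⟩ ⟨k, m⟩
  fin_cases i <;> fin_cases j <;> fin_cases k <;> fin_cases m <;>
    simp [uMat, uVec, vecMulVec_apply, one_apply, ofReal_sqrt_one_sub_sq_mul_self ha] <;>
    ring

/-- `u(a,λ)` is unitary, has `dim Ker(u(a,λ) − I) = 3`, and the unit
vector `x = (a,0,0,(1−a²)^{1/2})ᵗ` is an eigenvector for the eigenvalue `λ`. -/
theorem stmt_12 (a : ℝ) (ha0 : 0 ≤ a) (ha : a ≤ 1 / Real.sqrt 2)
    (l : ℂ) (hl : ‖l‖ = 1) (hl1 : l ≠ 1)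
    (x : Fin 2 × Fin 2 → ℂ)
    (hx : x = fun p => if p = (0, 0) then (a : ℂ)
      else if p = (1, 1) then (Real.sqrt (1 - a ^ 2) : ℂ) else 0) :
    uMat a l ∈ Matrix.unitaryGroup (Fin 2 × Fin 2) ℂ ∧
    Module.finrank ℂ (LinearMap.ker (Matrix.mulVecLin (uMat a l - 1))) = 3 ∧
    (∑ p, ‖x p‖ ^ 2 = 1) ∧
    uMat a l *ᵥ x = l • x := by
  change x = uVec a at hx
  subst hx
  have ha2 : a ^ 2 ≤ 1 := pow_le_one₀ ha0 <| ha.trans <| by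
    rw [div_le_one (by positivity)]
    exact Real.one_le_sqrt.2 one_le_two
  have hnorm := star_uVec_dotProduct_self ha2
  have hne : uVec a ≠ 0 := fun h => by simp [h] at hnorm
  rw [uMat_eq_one_add_smul_vecMulVec ha2]
  refine ⟨(isStarProjection_vecMulVec_star hnorm).one_add_smul_mem_unitary ?_, ?_,
    sum_norm_sq_uVec ha2, ?_⟩
  · rw [RCLike.star_def, RCLike.conj_mul, hl, RCLike.ofReal_one, one_pow]
  · have := finrank_ker_mulVecLin_vecMulVec_add_one (smul_ne_zero (sub_ne_zero.2 hl1) hne)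
      (star_ne_zero.2 hne)
    rw [add_sub_cancel_left, ← smul_vecMulVec]
    simpa using this
  · rw [add_mulVec, one_mulVec, smul_mulVec, vecMulVec_star_mulVec_self hnorm, sub_smul, one_smul,
      add_sub_cancel]
end

section
/- Let λ ∈ ℂ with |λ| = 1 and λ ≠ 1, and let u = u(0,λ) (so u is the diagonal matrix diag(1,1,1,λ)). Then Ω_u = {(z,w) ∈ ℂ²×ℂ² : ‖z‖ ≤ 1, ‖w‖ ≤ 1, z₂·w₂ = 0} and the core is Ω_u⁰ = {(z,w) : z₂ = 0, w₂ = 0, |z₁| ≤ 1, |w₁| ≤ 1}. -/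
open Matrix

/-! For `a = 0` the matrix `u(0,λ) = diag(1,1,1,λ)` is diagonal, so the relations
`z_i w_j = Σ u_{(i,j),(k,l)} z_k w_l` are trivial except for `(i,j) = (2,2)`, where it reads
`(λ - 1) z₂ w₂ = 0`; likewise every `C_{(i,j)}` vanishes except `C_{(2,2)} = (λ - 1) E_{2,2}`,
which kills `w` (resp. `z`) exactly when `w₂ = 0` (resp. `z₂ = 0`). -/

lemma uMat_zero_apply (l : ℂ) (p q : Fin 2 × Fin 2) :
    uMat 0 l p q = if p = q then (if p = (1, 1) then l else 1) else 0 := by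
  unfold uMat
  by_cases hpq : p = q
  · subst hpq
    by_cases hp : p = (1, 1) <;> simp [hp]
  · simp only [of_apply, hpq, if_false]
    split_ifs <;> simp_all

lemma sum_uMat_zero_mul (l : ℂ) (z w : Fin 2 → ℂ) (i j : Fin 2) :
    ∑ k, ∑ m, uMat 0 l (i, j) (k, m) * z k * w m
      = (if (i, j) = ((1, 1) : Fin 2 × Fin 2) then l else 1) * z i * w j := by
  rw [← Fintype.sum_prod_type']
  simp only [uMat_zero_apply, ite_mul, zero_mul, Finset.sum_ite_eq, Finset.mem_univ, if_true]

lemma forall_mul_eq_sum_uMat_zero_iff {l : ℂ} (hl : l ≠ 1) (z w : Fin 2 → ℂ) :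
    (∀ i j, z i * w j = ∑ k, ∑ m, uMat 0 l (i, j) (k, m) * z k * w m) ↔ z 1 * w 1 = 0 := by
  simp only [sum_uMat_zero_mul]
  constructor
  · intro h
    have h11 := h 1 1
    simp only [if_true] at h11
    have : (l - 1) * (z 1 * w 1) = 0 := by linear_combination -h11
    exact (mul_eq_zero.mp this).resolve_left (sub_ne_zero.mpr hl)
  · intro h i j
    split_ifs with hij
    · obtain ⟨rfl, rfl⟩ := Prod.ext_iff.mp hij
      rw [mul_assoc, h, mul_zero]
    · rw [one_mul]

lemma uMat_zero_sub_single (l : ℂ) (i j : Fin 2) :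
    (Matrix.of fun k m => uMat 0 l (i, j) (k, m) - if (k, m) = (i, j) then 1 else 0)
      = if (i, j) = ((1, 1) : Fin 2 × Fin 2) then single 1 1 (l - 1) else 0 := by
  ext k m
  simp only [of_apply, uMat_zero_apply]
  split_ifs <;> simp_all [Prod.ext_iff, eq_comm]

lemma forall_ite_single_mulVec_eq_zero_iff {c : ℂ} (hc : c ≠ 0) (w : Fin 2 → ℂ) :
    (∀ i j : Fin 2,
      (if (i, j) = ((1, 1) : Fin 2 × Fin 2) then single (1 : Fin 2) (1 : Fin 2) c else 0)
        *ᵥ w = 0) ↔ w 1 = 0 := by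
  constructor
  · intro h
    have h11 := congrFun (h 1 1) 1
    simp only [if_true, single_mulVec, Function.update_self, Pi.zero_apply] at h11
    exact (mul_eq_zero.mp h11).resolve_left hc
  · intro h i j
    split_ifs
    · simp [single_mulVec, h]
    · exact zero_mulVec w

lemma forall_uMat_zero_sub_single_mulVec_eq_zero_iff {l : ℂ} (hl : l ≠ 1) (w : Fin 2 → ℂ) :
    (∀ i j, (Matrix.of fun k m => uMat 0 l (i, j) (k, m) - if (k, m) = (i, j) then 1 else 0)
      *ᵥ w = 0) ↔ w 1 = 0 := by
  simp only [uMat_zero_sub_single]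
  exact forall_ite_single_mulVec_eq_zero_iff (sub_ne_zero.mpr hl) w

lemma forall_uMat_zero_sub_single_transpose_mulVec_eq_zero_iff {l : ℂ} (hl : l ≠ 1)
    (z : Fin 2 → ℂ) :
    (∀ i j, (Matrix.of fun k m => uMat 0 l (i, j) (k, m) - if (k, m) = (i, j) then 1 else 0)ᵀ
      *ᵥ z = 0) ↔ z 1 = 0 := by
  simp only [uMat_zero_sub_single, apply_ite transpose, transpose_single, transpose_zero]
  exact forall_ite_single_mulVec_eq_zero_iff (sub_ne_zero.mpr hl) z

lemma sum_fin_two_norm_sq_le_one_iff {E : Type*} [SeminormedAddGroup E] {x : Fin 2 → E}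
    (hx : x 1 = 0) : ∑ i, ‖x i‖ ^ 2 ≤ 1 ↔ ‖x 0‖ ≤ 1 := by
  rw [Fin.sum_univ_two, hx, norm_zero, zero_pow two_ne_zero, add_zero,
    pow_le_one_iff_of_nonneg (norm_nonneg _) two_ne_zero]

theorem stmt_13_general (lm : ℂ) (hl1 : lm ≠ 1) :
    ({p : (Fin 2 → ℂ) × (Fin 2 → ℂ) |
        (∑ i, ‖p.1 i‖ ^ 2 ≤ 1) ∧ (∑ j, ‖p.2 j‖ ^ 2 ≤ 1) ∧
        ∀ i j, p.1 i * p.2 j = ∑ k, ∑ l, uMat 0 lm (i, j) (k, l) * p.1 k * p.2 l}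
      = {p : (Fin 2 → ℂ) × (Fin 2 → ℂ) |
          (∑ i, ‖p.1 i‖ ^ 2 ≤ 1) ∧ (∑ j, ‖p.2 j‖ ^ 2 ≤ 1) ∧ p.1 1 * p.2 1 = 0}) ∧
    ({p : (Fin 2 → ℂ) × (Fin 2 → ℂ) |
        (∑ i, ‖p.1 i‖ ^ 2 ≤ 1) ∧ (∑ j, ‖p.2 j‖ ^ 2 ≤ 1) ∧
        (∀ i j, p.1 i * p.2 j = ∑ k, ∑ l, uMat 0 lm (i, j) (k, l) * p.1 k * p.2 l) ∧
        (∀ i j,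
          (Matrix.of fun k l =>
            uMat 0 lm (i, j) (k, l) - if (k, l) = (i, j) then 1 else 0) *ᵥ p.2 = 0 ∧
          (Matrix.of fun k l =>
            uMat 0 lm (i, j) (k, l) - if (k, l) = (i, j) then 1 else 0)ᵀ *ᵥ p.1 = 0)}
      = {p : (Fin 2 → ℂ) × (Fin 2 → ℂ) |
          p.1 1 = 0 ∧ p.2 1 = 0 ∧ ‖p.1 0‖ ≤ 1 ∧ ‖p.2 0‖ ≤ 1}) := by
  constructor <;> ext ⟨z, w⟩ <;>
    simp only [Set.mem_ofPred_eq, forall_mul_eq_sum_uMat_zero_iff hl1, forall_and,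
      forall_uMat_zero_sub_single_mulVec_eq_zero_iff hl1,
      forall_uMat_zero_sub_single_transpose_mulVec_eq_zero_iff hl1]
  constructor
  · rintro ⟨hz, hw, -, hw1, hz1⟩
    exact ⟨hz1, hw1, (sum_fin_two_norm_sq_le_one_iff hz1).mp hz,
      (sum_fin_two_norm_sq_le_one_iff hw1).mp hw⟩
  · rintro ⟨hz1, hw1, hz, hw⟩
    exact ⟨(sum_fin_two_norm_sq_le_one_iff hz1).mpr hz,
      (sum_fin_two_norm_sq_le_one_iff hw1).mpr hw, by rw [hz1, zero_mul], hw1, hz1⟩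

/-- for `u = u(0,λ)`, the character space `Ω_u` consists of the pairs
`(z,w)` in the product of closed unit balls with `z₂·w₂ = 0`, and the core consists of
the pairs with `z₂ = w₂ = 0`, `|z₁| ≤ 1`, `|w₁| ≤ 1`. -/
theorem stmt_13 (lm : ℂ) (hl : ‖lm‖ = 1) (hl1 : lm ≠ 1) :
    ({p : (Fin 2 → ℂ) × (Fin 2 → ℂ) |
        (∑ i, ‖p.1 i‖ ^ 2 ≤ 1) ∧ (∑ j, ‖p.2 j‖ ^ 2 ≤ 1) ∧
        ∀ i j, p.1 i * p.2 j = ∑ k, ∑ l, uMat 0 lm (i, j) (k, l) * p.1 k * p.2 l}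
      = {p : (Fin 2 → ℂ) × (Fin 2 → ℂ) |
          (∑ i, ‖p.1 i‖ ^ 2 ≤ 1) ∧ (∑ j, ‖p.2 j‖ ^ 2 ≤ 1) ∧ p.1 1 * p.2 1 = 0}) ∧
    ({p : (Fin 2 → ℂ) × (Fin 2 → ℂ) |
        (∑ i, ‖p.1 i‖ ^ 2 ≤ 1) ∧ (∑ j, ‖p.2 j‖ ^ 2 ≤ 1) ∧
        (∀ i j, p.1 i * p.2 j = ∑ k, ∑ l, uMat 0 lm (i, j) (k, l) * p.1 k * p.2 l) ∧
        (∀ i j,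
          (Matrix.of fun k l =>
            uMat 0 lm (i, j) (k, l) - if (k, l) = (i, j) then 1 else 0) *ᵥ p.2 = 0 ∧
          (Matrix.of fun k l =>
            uMat 0 lm (i, j) (k, l) - if (k, l) = (i, j) then 1 else 0)ᵀ *ᵥ p.1 = 0)}
      = {p : (Fin 2 → ℂ) × (Fin 2 → ℂ) |
          p.1 1 = 0 ∧ p.2 1 = 0 ∧ ‖p.1 0‖ ≤ 1 ∧ ‖p.2 0‖ ≤ 1}) :=
  stmt_13_general lm hl1
end

section
/- Let u be a 4×4 unitary complex matrix indexed by pairs (i,j) ∈ {1,2}×{1,2} with Ker(u − I) = {0}. Then Ω_u = (B̄₂ × {0}) ∪ ({0} × B̄₂), where B̄₂ is the closed Euclidean unit ball of ℂ², and the core is Ω_u⁰ = {(0,0)}. -/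
/-!
Writing `z ⊗ w` for the vector `(k, l) ↦ z k * w l` on `m × n`, the equations defining `V_u` say
exactly that `z ⊗ w` is fixed by `u`. When `1` is not an eigenvalue of `u` this forces `z ⊗ w = 0`,
i.e. `z = 0` or `w = 0`. For the core, the `k`-th entry of `C_{(i,j)} w` is the `(i, j)`-entry of
`(u - 1) (e_k ⊗ w)`, and the `l`-th entry of `C_{(i,j)}ᵀ z` that of `(u - 1) (z ⊗ e_l)`; so the
core conditions make `e_k ⊗ w` and `z ⊗ e_l` fixed by `u`, whence `w = 0` and `z = 0`.
-/

open Matrix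

namespace Matrix

variable {ι m n R : Type*}

theorem of_sub_one_row [DecidableEq m] [DecidableEq n] [Ring R]
    (u : Matrix (m × n) (m × n) R) (i : m) (j : n) :
    (of fun k l => u (i, j) (k, l) - if (k, l) = (i, j) then 1 else 0)
      = of fun k l => (u - 1) (i, j) (k, l) := by
  ext k l
  simp [one_apply, eq_comm]

theorem prod_mul_eq_zero_iff [MulZeroClass R] [NoZeroDivisors R] {z : m → R} {w : n → R} :
    (fun p : m × n => z p.1 * w p.2) = 0 ↔ z = 0 ∨ w = 0 := by
  simp only [funext_iff, Prod.forall, Pi.zero_apply, mul_eq_zero, forall_or_left,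
    forall_or_right]

variable [Fintype m] [Fintype n]

theorem mulVec_prod_mul_apply [CommSemiring R] (A : Matrix ι (m × n) R)
    (z : m → R) (w : n → R) (x : ι) :
    (A *ᵥ (fun p : m × n => z p.1 * w p.2)) x = ∑ k, ∑ l, A x (k, l) * z k * w l := by
  simp only [mulVec, dotProduct, Fintype.sum_prod_type, mul_assoc]

variable [CommRing R]

theorem eq_zero_or_eq_zero_of_forall_mul_eq_sum [DecidableEq m] [DecidableEq n]
    [NoZeroDivisors R] {u : Matrix (m × n) (m × n) R}
    (hker : LinearMap.ker (mulVecLin (u - 1)) = ⊥) {z : m → R} {w : n → R}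
    (h : ∀ i j, z i * w j = ∑ k, ∑ l, u (i, j) (k, l) * z k * w l) :
    z = 0 ∨ w = 0 := by
  refine prod_mul_eq_zero_iff.mp (LinearMap.ker_eq_bot'.mp hker _ ?_)
  ext ⟨i, j⟩
  simp [mulVec_prod_mul_apply, ← h i j]

theorem eq_zero_of_forall_row_mulVec_eq_zero [DecidableEq m] [Nonempty m]
    {A : Matrix (m × n) (m × n) R} (hker : LinearMap.ker (mulVecLin A) = ⊥) {w : n → R}
    (h : ∀ i j, (of fun k l => A (i, j) (k, l)) *ᵥ w = 0) : w = 0 := by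
  obtain ⟨k₀⟩ := ‹Nonempty m›
  have hfix : (fun p : m × n => (Pi.single k₀ 1 : m → R) p.1 * w p.2) = 0 := by
    refine LinearMap.ker_eq_bot'.mp hker _ ?_
    ext ⟨i, j⟩
    rw [mulVecLin_apply, mulVec_prod_mul_apply]
    simpa [Pi.single_apply, mulVec, dotProduct] using congrFun (h i j) k₀
  ext l
  simpa using congrFun hfix (k₀, l)

theorem eq_zero_of_forall_row_transpose_mulVec_eq_zero [DecidableEq n] [Nonempty n]
    {A : Matrix (m × n) (m × n) R} (hker : LinearMap.ker (mulVecLin A) = ⊥) {z : m → R}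
    (h : ∀ i j, (of fun k l => A (i, j) (k, l))ᵀ *ᵥ z = 0) : z = 0 := by
  obtain ⟨l₀⟩ := ‹Nonempty n›
  have hfix : (fun p : m × n => z p.1 * (Pi.single l₀ 1 : n → R) p.2) = 0 := by
    refine LinearMap.ker_eq_bot'.mp hker _ ?_
    ext ⟨i, j⟩
    rw [mulVecLin_apply, mulVec_prod_mul_apply]
    simpa [Pi.single_apply, mulVec, dotProduct, mul_comm] using congrFun (h i j) l₀
  ext k
  simpa using congrFun hfix (k, l₀)

end Matrix

theorem stmt_15_general (u : Matrix (Fin 2 × Fin 2) (Fin 2 × Fin 2) ℂ)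
    (hker : LinearMap.ker (Matrix.mulVecLin (u - 1)) = ⊥) :
    ({p : (Fin 2 → ℂ) × (Fin 2 → ℂ) |
        (∑ i, ‖p.1 i‖ ^ 2 ≤ 1) ∧ (∑ j, ‖p.2 j‖ ^ 2 ≤ 1) ∧
        ∀ i j, p.1 i * p.2 j = ∑ k, ∑ l, u (i, j) (k, l) * p.1 k * p.2 l}
      = {p : (Fin 2 → ℂ) × (Fin 2 → ℂ) |
          ((∑ i, ‖p.1 i‖ ^ 2 ≤ 1) ∧ p.2 = 0) ∨
          (p.1 = 0 ∧ (∑ j, ‖p.2 j‖ ^ 2 ≤ 1))}) ∧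
    ({p : (Fin 2 → ℂ) × (Fin 2 → ℂ) |
        (∑ i, ‖p.1 i‖ ^ 2 ≤ 1) ∧ (∑ j, ‖p.2 j‖ ^ 2 ≤ 1) ∧
        (∀ i j, p.1 i * p.2 j = ∑ k, ∑ l, u (i, j) (k, l) * p.1 k * p.2 l) ∧
        (∀ i j,
          (Matrix.of fun k l =>
            u (i, j) (k, l) - if (k, l) = (i, j) then 1 else 0) *ᵥ p.2 = 0 ∧
          (Matrix.of fun k l =>
            u (i, j) (k, l) - if (k, l) = (i, j) then 1 else 0)ᵀ *ᵥ p.1 = 0)}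
      = {((0 : Fin 2 → ℂ), (0 : Fin 2 → ℂ))}) := by
  constructor
  · ext ⟨z, w⟩
    constructor
    · rintro ⟨hz, hw, hfix⟩
      rcases eq_zero_or_eq_zero_of_forall_mul_eq_sum hker hfix with rfl | rfl
      exacts [Or.inr ⟨rfl, hw⟩, Or.inl ⟨hz, rfl⟩]
    · rintro (⟨hz, rfl⟩ | ⟨rfl, hw⟩) <;> simp_all
  · ext ⟨z, w⟩
    constructor
    · rintro ⟨-, -, -, hcore⟩
      simp only [of_sub_one_row] at hcore
      rw [eq_zero_of_forall_row_transpose_mulVec_eq_zero hker fun i j => (hcore i j).2,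
        eq_zero_of_forall_row_mulVec_eq_zero hker fun i j => (hcore i j).1]
      rfl
    · rintro ⟨⟩
      simp

/-- if `Ker(u − I) = {0}` then `Ω_u = (B̄₂ × {0}) ∪ ({0} × B̄₂)` and the
core is `{(0,0)}`. -/
theorem stmt_15 (u : Matrix (Fin 2 × Fin 2) (Fin 2 × Fin 2) ℂ)
    (hu : u ∈ Matrix.unitaryGroup (Fin 2 × Fin 2) ℂ)
    (hker : LinearMap.ker (Matrix.mulVecLin (u - 1)) = ⊥) :
    ({p : (Fin 2 → ℂ) × (Fin 2 → ℂ) |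
        (∑ i, ‖p.1 i‖ ^ 2 ≤ 1) ∧ (∑ j, ‖p.2 j‖ ^ 2 ≤ 1) ∧
        ∀ i j, p.1 i * p.2 j = ∑ k, ∑ l, u (i, j) (k, l) * p.1 k * p.2 l}
      = {p : (Fin 2 → ℂ) × (Fin 2 → ℂ) |
          ((∑ i, ‖p.1 i‖ ^ 2 ≤ 1) ∧ p.2 = 0) ∨
          (p.1 = 0 ∧ (∑ j, ‖p.2 j‖ ^ 2 ≤ 1))}) ∧
    ({p : (Fin 2 → ℂ) × (Fin 2 → ℂ) |
        (∑ i, ‖p.1 i‖ ^ 2 ≤ 1) ∧ (∑ j, ‖p.2 j‖ ^ 2 ≤ 1) ∧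
        (∀ i j, p.1 i * p.2 j = ∑ k, ∑ l, u (i, j) (k, l) * p.1 k * p.2 l) ∧
        (∀ i j,
          (Matrix.of fun k l =>
            u (i, j) (k, l) - if (k, l) = (i, j) then 1 else 0) *ᵥ p.2 = 0 ∧
          (Matrix.of fun k l =>
            u (i, j) (k, l) - if (k, l) = (i, j) then 1 else 0)ᵀ *ᵥ p.1 = 0)}
      = {((0 : Fin 2 → ℂ), (0 : Fin 2 → ℂ))}) :=
  stmt_15_general u hker
end

section
/- Let u be a 4×4 unitary complex matrix indexed by pairs (i,j) ∈ {1,2}×{1,2} with dim_ℂ Ker(u − I) = 1, and let the nonzero vector with coordinates (a,b,c,d) (in the lexicographic order (1,1),(1,2),(2,1),(2,2)) span Ker(u − I). Then: (1) the core Ω_u⁰ = {(0,0)}; (2) if a·d ≠ b·c then Ω_u = (B̄₂ × {0}) ∪ ({0} × B̄₂); (3) if a·d = b·c then Ω_u contains a point (z,w) with z ≠ 0 and w ≠ 0. -/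
/-!
The defining equations of `V_u` say that the tensor `z ⊗ w` is a fixed vector of `u`, hence
a multiple `c • x` of `x`. Since a tensor has vanishing `2 × 2` minors, `c ≠ 0` forces
`ad = bc`: so for `ad ≠ bc` one of `z`, `w` vanishes, while for `ad = bc` the vector `x`
factors as `z ⊗ w`, and rescaling `z` and `w` brings the point into the closed bidisc.
The core conditions `C_{(i,j)} w = 0` say that `e ⊗ w` is fixed by `u` for every `e`; as the
fixed vectors form a line, the tensors `e₁ ⊗ w` and `e₂ ⊗ w` are proportional, which forces
`w = 0`.
Symmetrically `C_{(i,j)}ᵀ z = 0` forces `z = 0`.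
-/

open Matrix

section

variable {ι κ R : Type*}

def outerVec [Mul R] (z : ι → R) (w : κ → R) : ι × κ → R := fun q => z q.1 * w q.2

@[simp]
lemma outerVec_apply [Mul R] (z : ι → R) (w : κ → R) (i : ι) (j : κ) :
    outerVec z w (i, j) = z i * w j :=
  rfl

@[simp]
lemma outerVec_zero_left [MulZeroClass R] (w : κ → R) : outerVec (0 : ι → R) w = 0 :=
  funext fun _ => zero_mul _

@[simp]
lemma outerVec_zero_right [MulZeroClass R] (z : ι → R) : outerVec z (0 : κ → R) = 0 :=
  funext fun _ => mul_zero _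

lemma outerVec_comp_swap [CommMagma R] (z : ι → R) (w : κ → R) :
    outerVec z w ∘ Prod.swap = outerVec w z :=
  funext fun _ => mul_comm _ _

lemma outerVec_eq_zero_iff [MulZeroClass R] [NoZeroDivisors R] {z : ι → R} {w : κ → R} :
    outerVec z w = 0 ↔ z = 0 ∨ w = 0 := by
  constructor
  · intro h
    by_contra! hzw
    obtain ⟨i, hi⟩ := Function.ne_iff.1 hzw.1
    obtain ⟨j, hj⟩ := Function.ne_iff.1 hzw.2
    exact mul_ne_zero hi hj (congrFun h (i, j))
  · rintro (rfl | rfl) <;> simp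

lemma outerVec_smul_smul {S : Type*} [Monoid S] [Mul R] [MulAction S R] [IsScalarTower S R R]
    [SMulCommClass S R R] (s t : S) (z : ι → R) (w : κ → R) :
    outerVec (s • z) (t • w) = (s * t) • outerVec z w :=
  funext fun _ => smul_mul_smul_comm _ _ _ _

lemma mulVec_outerVec_eq_self_iff [Fintype ι] [Fintype κ] [CommSemiring R]
    (u : Matrix (ι × κ) (ι × κ) R) (z : ι → R) (w : κ → R) :
    u *ᵥ outerVec z w = outerVec z w ↔
      ∀ i j, z i * w j = ∑ k, ∑ l, u (i, j) (k, l) * z k * w l := by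
  simp only [funext_iff, Prod.forall, mulVec, dotProduct, Fintype.sum_prod_type, outerVec_apply,
    mul_assoc]
  exact forall₂_congr fun _ _ => eq_comm

/-- The matrix `C_{(i,j)} = u_{(i,j)} - E_{i,j}` of the paper. -/
def coreMatrix [Ring R] [DecidableEq ι] [DecidableEq κ] (u : Matrix (ι × κ) (ι × κ) R)
    (i : ι) (j : κ) : Matrix ι κ R :=
  Matrix.of fun k l => u (i, j) (k, l) - if (k, l) = (i, j) then 1 else 0

section Core

variable [Fintype ι] [Fintype κ] [DecidableEq ι] [DecidableEq κ] [CommRing R]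
  (u : Matrix (ι × κ) (ι × κ) R)

lemma dotProduct_coreMatrix_mulVec (i : ι) (j : κ) (z : ι → R) (w : κ → R) :
    z ⬝ᵥ (coreMatrix u i j *ᵥ w) = (u *ᵥ outerVec z w) (i, j) - outerVec z w (i, j) := by
  simp only [coreMatrix, dotProduct, mulVec, of_apply, sub_mul, Finset.sum_sub_distrib,
    mul_sub, Finset.mul_sum, Fintype.sum_prod_type, outerVec_apply]
  congr 1
  · simp only [mul_left_comm]
  · simp [ite_and]

lemma mulVec_outerVec_eq_self_of_coreMatrix_mulVec_eq_zero {w : κ → R}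
    (h : ∀ i j, coreMatrix u i j *ᵥ w = 0) (e : ι → R) :
    u *ᵥ outerVec e w = outerVec e w := by
  ext ⟨i, j⟩
  have := dotProduct_coreMatrix_mulVec u i j e w
  rwa [h, dotProduct_zero, eq_comm, sub_eq_zero] at this

lemma mulVec_outerVec_eq_self_of_coreMatrix_transpose_mulVec_eq_zero {z : ι → R}
    (h : ∀ i j, (coreMatrix u i j)ᵀ *ᵥ z = 0) (e : κ → R) :
    u *ᵥ outerVec z e = outerVec z e := by
  ext ⟨i, j⟩
  have := dotProduct_coreMatrix_mulVec u i j z e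
  rwa [dotProduct_mulVec, ← mulVec_transpose, h, zero_dotProduct, eq_comm, sub_eq_zero] at this

end Core

section Field

variable {K : Type*} [Field K]

lemma eq_zero_of_forall_outerVec_mem_span_singleton_right [DecidableEq ι] {i i' : ι}
    (hi : i ≠ i') {x : ι × κ → K} {w : κ → K} (h : ∀ e : ι → K, outerVec e w ∈ K ∙ x) :
    w = 0 := by
  ext l
  obtain ⟨c, hc⟩ := Submodule.mem_span_singleton.1 (h (Pi.single i 1))
  obtain ⟨c', hc'⟩ := Submodule.mem_span_singleton.1 (h (Pi.single i' 1))
  have h₁ := congrFun hc (i, l)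
  have h₂ := congrFun hc (i', l)
  have h₃ := congrFun hc' (i', l)
  simp only [Pi.smul_apply, smul_eq_mul, outerVec_apply, Pi.single_eq_same,
    Pi.single_eq_of_ne hi.symm, one_mul, zero_mul] at h₁ h₂ h₃
  rcases mul_eq_zero.1 h₂ with hc0 | hx0
  · rw [← h₁, hc0, zero_mul, Pi.zero_apply]
  · rw [← h₃, hx0, mul_zero, Pi.zero_apply]

lemma eq_zero_of_forall_outerVec_mem_span_singleton_left [DecidableEq κ] {j j' : κ}
    (hj : j ≠ j') {x : ι × κ → K} {z : ι → K} (h : ∀ e : κ → K, outerVec z e ∈ K ∙ x) :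
    z = 0 := by
  refine eq_zero_of_forall_outerVec_mem_span_singleton_right hj (x := x ∘ Prod.swap)
    fun e => ?_
  obtain ⟨c, hc⟩ := Submodule.mem_span_singleton.1 (h e)
  exact Submodule.mem_span_singleton.2 ⟨c, by rw [← outerVec_comp_swap, ← hc]; rfl⟩

lemma minor_eq_of_smul_eq_outerVec {x : ι × κ → K} {z : ι → K} {w : κ → K} {c : K}
    (hc : c ≠ 0) (h : c • x = outerVec z w) (k k' : ι) (l l' : κ) :
    x (k, l) * x (k', l') = x (k, l') * x (k', l) := by
  have e : ∀ k l, c * x (k, l) = z k * w l := fun k l => congrFun h (k, l)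
  refine mul_left_cancel₀ (pow_ne_zero 2 hc) ?_
  linear_combination (c * x (k', l')) * e k l + (z k * w l) * e k' l' - (c * x (k', l)) * e k l'
    - (z k * w l') * e k' l

lemma exists_outerVec_eq_of_minor_eq {x : ι × κ → K} (hx : x ≠ 0)
    (hminor : ∀ k k' l l', x (k, l) * x (k', l') = x (k, l') * x (k', l)) :
    ∃ z w, outerVec z w = x := by
  obtain ⟨⟨k₀, l₀⟩, h₀⟩ := Function.ne_iff.1 hx
  replace h₀ : x (k₀, l₀) ≠ 0 := h₀
  refine ⟨fun k => x (k, l₀), fun l => x (k₀, l) / x (k₀, l₀), funext fun ⟨k, l⟩ => ?_⟩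
  simp only [outerVec_apply]
  field_simp
  linear_combination -hminor k₀ k l₀ l

lemma exists_outerVec_eq_of_fin_two {x : Fin 2 × Fin 2 → K} (hx : x ≠ 0)
    (hdet : x (0, 0) * x (1, 1) = x (0, 1) * x (1, 0)) : ∃ z w, outerVec z w = x := by
  refine exists_outerVec_eq_of_minor_eq hx fun k k' l l' => ?_
  fin_cases k <;> fin_cases k' <;> fin_cases l <;> fin_cases l' <;> simp <;>
    first | linear_combination hdet | linear_combination -hdet | linear_combination

end Field

lemma exists_pos_sum_norm_smul_sq_le_one {E : Type*} [SeminormedAddCommGroup E]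
    [NormedSpace ℝ E] [Fintype ι] (z : ι → E) :
    ∃ s : ℝ, 0 < s ∧ ∑ i, ‖(s • z) i‖ ^ 2 ≤ 1 := by
  set S := ∑ i, ‖z i‖ ^ 2
  have hS : 0 ≤ S := by positivity
  refine ⟨(1 + S)⁻¹, by positivity, ?_⟩
  simp only [Pi.smul_apply, norm_smul, mul_pow, ← Finset.mul_sum]
  rw [Real.norm_of_nonneg (by positivity), inv_pow, inv_mul_le_iff₀ (by positivity)]
  nlinarith

lemma mem_ker_mulVecLin_sub_one_iff [Fintype ι] [DecidableEq ι] [CommRing R]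
    (u : Matrix ι ι R) (v : ι → R) :
    v ∈ LinearMap.ker (mulVecLin (u - 1)) ↔ u *ᵥ v = v := by
  simp [sub_eq_zero]

end

theorem stmt_16_general (u : Matrix (Fin 2 × Fin 2) (Fin 2 × Fin 2) ℂ)
    (x : Fin 2 × Fin 2 → ℂ) (hx : x ≠ 0)
    (hspan : Submodule.span ℂ {x} = LinearMap.ker (Matrix.mulVecLin (u - 1))) :
    ({p : (Fin 2 → ℂ) × (Fin 2 → ℂ) |
        (∑ i, ‖p.1 i‖ ^ 2 ≤ 1) ∧ (∑ j, ‖p.2 j‖ ^ 2 ≤ 1) ∧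
        (∀ i j, p.1 i * p.2 j = ∑ k, ∑ l, u (i, j) (k, l) * p.1 k * p.2 l) ∧
        (∀ i j,
          (Matrix.of fun k l =>
            u (i, j) (k, l) - if (k, l) = (i, j) then 1 else 0) *ᵥ p.2 = 0 ∧
          (Matrix.of fun k l =>
            u (i, j) (k, l) - if (k, l) = (i, j) then 1 else 0)ᵀ *ᵥ p.1 = 0)}
      = {((0 : Fin 2 → ℂ), (0 : Fin 2 → ℂ))}) ∧
    (x (0, 0) * x (1, 1) ≠ x (0, 1) * x (1, 0) →
      {p : (Fin 2 → ℂ) × (Fin 2 → ℂ) |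
          (∑ i, ‖p.1 i‖ ^ 2 ≤ 1) ∧ (∑ j, ‖p.2 j‖ ^ 2 ≤ 1) ∧
          ∀ i j, p.1 i * p.2 j = ∑ k, ∑ l, u (i, j) (k, l) * p.1 k * p.2 l}
        = {p : (Fin 2 → ℂ) × (Fin 2 → ℂ) |
            ((∑ i, ‖p.1 i‖ ^ 2 ≤ 1) ∧ p.2 = 0) ∨
            (p.1 = 0 ∧ (∑ j, ‖p.2 j‖ ^ 2 ≤ 1))}) ∧
    (x (0, 0) * x (1, 1) = x (0, 1) * x (1, 0) →
      ∃ p : (Fin 2 → ℂ) × (Fin 2 → ℂ),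
        (∑ i, ‖p.1 i‖ ^ 2 ≤ 1) ∧ (∑ j, ‖p.2 j‖ ^ 2 ≤ 1) ∧
        (∀ i j, p.1 i * p.2 j = ∑ k, ∑ l, u (i, j) (k, l) * p.1 k * p.2 l) ∧
        p.1 ≠ 0 ∧ p.2 ≠ 0) := by
  have hfix (v) : u *ᵥ v = v ↔ v ∈ ℂ ∙ x := by rw [hspan, mem_ker_mulVecLin_sub_one_iff]
  refine ⟨?_, fun hdet => ?_, fun hdet => ?_⟩
  · ext ⟨z, w⟩
    refine ⟨fun ⟨_, _, _, hcore⟩ => Prod.ext ?_ ?_, fun h => ?_⟩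
    · exact eq_zero_of_forall_outerVec_mem_span_singleton_left zero_ne_one fun e => (hfix _).1 <|
        mulVec_outerVec_eq_self_of_coreMatrix_transpose_mulVec_eq_zero u (hcore · · |>.2) e
    · exact eq_zero_of_forall_outerVec_mem_span_singleton_right zero_ne_one fun e => (hfix _).1 <|
        mulVec_outerVec_eq_self_of_coreMatrix_mulVec_eq_zero u (hcore · · |>.1) e
    · obtain ⟨rfl, rfl⟩ := Prod.mk.inj (Set.mem_singleton_iff.1 h)
      simp
  · ext ⟨z, w⟩
    simp only [Set.mem_ofPred_eq, ← mulVec_outerVec_eq_self_iff]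
    refine ⟨fun ⟨hz, hw, hzw⟩ => ?_, ?_⟩
    · obtain ⟨c, hc⟩ := Submodule.mem_span_singleton.1 ((hfix _).1 hzw)
      obtain rfl : c = 0 := by_contra fun h => hdet (minor_eq_of_smul_eq_outerVec h hc 0 1 0 1)
      rcases outerVec_eq_zero_iff.1 (by rw [← hc, zero_smul]) with rfl | rfl
      · exact .inr ⟨rfl, hw⟩
      · exact .inl ⟨hz, rfl⟩
    · rintro (⟨hz, rfl⟩ | ⟨rfl, hw⟩)
      · exact ⟨hz, by simp, by simp⟩
      · exact ⟨by simp, hw, by simp⟩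
  · simp only [← mulVec_outerVec_eq_self_iff]
    obtain ⟨z, w, hzw⟩ := exists_outerVec_eq_of_fin_two hx hdet
    obtain ⟨s, hs, hsz⟩ := exists_pos_sum_norm_smul_sq_le_one z
    obtain ⟨t, ht, htw⟩ := exists_pos_sum_norm_smul_sq_le_one w
    refine ⟨(s • z, t • w), hsz, htw, ?_, smul_ne_zero hs.ne' ?_, smul_ne_zero ht.ne' ?_⟩
    · rw [outerVec_smul_smul, hzw, mulVec_smul, (hfix x).2 (Submodule.mem_span_singleton_self x)]
    all_goals rintro rfl; exact hx (by simp [← hzw])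

/-- case `dim Ker(u − I) = 1`, with `Ker(u − I)` spanned by the nonzero
vector `x = (a,b,c,d)`: the core is `{(0,0)}`; if `ad ≠ bc` then
`Ω_u = (B̄₂×{0}) ∪ ({0}×B̄₂)`; and if `ad = bc` then `Ω_u` contains a point `(z,w)`
with `z ≠ 0` and `w ≠ 0`. -/
theorem stmt_16 (u : Matrix (Fin 2 × Fin 2) (Fin 2 × Fin 2) ℂ)
    (hu : u ∈ Matrix.unitaryGroup (Fin 2 × Fin 2) ℂ)
    (hker : Module.finrank ℂ (LinearMap.ker (Matrix.mulVecLin (u - 1))) = 1)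
    (x : Fin 2 × Fin 2 → ℂ) (hx : x ≠ 0)
    (hspan : Submodule.span ℂ {x} = LinearMap.ker (Matrix.mulVecLin (u - 1))) :
    ({p : (Fin 2 → ℂ) × (Fin 2 → ℂ) |
        (∑ i, ‖p.1 i‖ ^ 2 ≤ 1) ∧ (∑ j, ‖p.2 j‖ ^ 2 ≤ 1) ∧
        (∀ i j, p.1 i * p.2 j = ∑ k, ∑ l, u (i, j) (k, l) * p.1 k * p.2 l) ∧
        (∀ i j,
          (Matrix.of fun k l =>
            u (i, j) (k, l) - if (k, l) = (i, j) then 1 else 0) *ᵥ p.2 = 0 ∧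
          (Matrix.of fun k l =>
            u (i, j) (k, l) - if (k, l) = (i, j) then 1 else 0)ᵀ *ᵥ p.1 = 0)}
      = {((0 : Fin 2 → ℂ), (0 : Fin 2 → ℂ))}) ∧
    (x (0, 0) * x (1, 1) ≠ x (0, 1) * x (1, 0) →
      {p : (Fin 2 → ℂ) × (Fin 2 → ℂ) |
          (∑ i, ‖p.1 i‖ ^ 2 ≤ 1) ∧ (∑ j, ‖p.2 j‖ ^ 2 ≤ 1) ∧
          ∀ i j, p.1 i * p.2 j = ∑ k, ∑ l, u (i, j) (k, l) * p.1 k * p.2 l}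
        = {p : (Fin 2 → ℂ) × (Fin 2 → ℂ) |
            ((∑ i, ‖p.1 i‖ ^ 2 ≤ 1) ∧ p.2 = 0) ∨
            (p.1 = 0 ∧ (∑ j, ‖p.2 j‖ ^ 2 ≤ 1))}) ∧
    (x (0, 0) * x (1, 1) = x (0, 1) * x (1, 0) →
      ∃ p : (Fin 2 → ℂ) × (Fin 2 → ℂ),
        (∑ i, ‖p.1 i‖ ^ 2 ≤ 1) ∧ (∑ j, ‖p.2 j‖ ^ 2 ≤ 1) ∧
        (∀ i j, p.1 i * p.2 j = ∑ k, ∑ l, u (i, j) (k, l) * p.1 k * p.2 l) ∧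
        p.1 ≠ 0 ∧ p.2 ≠ 0) :=
  stmt_16_general u x hx hspan
end
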